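/- arXiv:1812.03324 — 9 statements merged into one kernel-verified Lean document; each statement's English description precedes it below -/
import Mathlib

section
/- Let ρ ≥ 1 and n ≥ 2 be an integer, and let P ∈ P_n(ρ) with minimal mass p_min. Define i := ⌊(1 − n·p_min)/((ρ−1)·p_min)⌋ and define Q on {1,…,n} by Q(j) = ρ·p_min for j ∈ {1,…,i}, Q(i+1) = 1 − (n + i·ρ − i − 1)·p_min, and Q(j) = p_min for j ∈ {i+2,…,n}. Then: (1) Q ∈ P_n(ρ) and Q(1) ≥ Q(2) ≥ … ≥ Q(n) > 0; (2) P is majorized by Q. -/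
open Finset

/-- `P` is a probability mass function, strictly positive on `{1,…,n}`. -/
def IsPMF (n : ℕ) (P : ℕ → ℝ) : Prop :=
  (∀ i ∈ Finset.Icc 1 n, 0 < P i) ∧ ∑ i ∈ Finset.Icc 1 n, P i = 1

/-- The ratio of the maximal to minimal mass of `P` on `{1,…,n}` is at most `ρ`. -/
def RatioBdd (n : ℕ) (ρ : ℝ) (P : ℕ → ℝ) : Prop :=
  ∀ i ∈ Finset.Icc 1 n, ∀ j ∈ Finset.Icc 1 n, P i ≤ ρ * P j

/-- `P` is nonincreasing on `{1,…,n}`. -/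
def DecOn (n : ℕ) (P : ℕ → ℝ) : Prop :=
  ∀ i ∈ Finset.Icc 1 n, ∀ j ∈ Finset.Icc 1 n, i ≤ j → P j ≤ P i

/-- Sum of the `k` largest masses of `P` on `{1,…,n}`. -/
noncomputable def topSum (n : ℕ) (P : ℕ → ℝ) (k : ℕ) : ℝ :=
  sSup ((fun s : Finset ℕ => ∑ i ∈ s, P i) '' {s | s ⊆ Finset.Icc 1 n ∧ s.card = k})

/-- `P ≺ Q`: `P` is majorized by `Q`, both viewed on `{1,…,n}`. -/
def MajorizedBy (n : ℕ) (P Q : ℕ → ℝ) : Prop :=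
  ∀ k, 1 ≤ k → k ≤ n - 1 → topSum n P k ≤ topSum n Q k

/-- Zero-padding of a pmf on `{1,…,m}` outside of `{1,…,m}`. -/
def padTo (m : ℕ) (Q : ℕ → ℝ) : ℕ → ℝ := fun i => if i ≤ m then Q i else 0

/-- Rényi entropy of order `α` of `P` on `{1,…,n}` (Shannon entropy for `α = 1`);
natural logarithms. -/
noncomputable def renyiH (n : ℕ) (α : ℝ) (P : ℕ → ℝ) : ℝ :=
  if α = 1 then -∑ i ∈ Finset.Icc 1 n, P i * Real.log (P i)
  else (1 - α)⁻¹ * Real.log (∑ i ∈ Finset.Icc 1 n, P i ^ α)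

/-- `c_α^{(n)}(ρ) = log n − min_{P ∈ 𝒫_n(ρ)} H_α(P)` for `n ≥ 2`, and `0` for `n ≤ 1`. -/
noncomputable def cN (α ρ : ℝ) (n : ℕ) : ℝ :=
  if n ≤ 1 then 0
  else Real.log n - sInf (renyiH n α '' {P | IsPMF n P ∧ RatioBdd n ρ P})

/-- The closed-form expression for `c_α^{(∞)}(ρ)`, `α ∈ (0,1) ∪ (1,∞)`. -/
noncomputable def cInfinity (α ρ : ℝ) : ℝ :=
  (α - 1)⁻¹ * Real.log (1 + (1 + α * (ρ - 1) - ρ ^ α) / ((1 - α) * (ρ - 1)))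
    - α / (α - 1) * Real.log (1 + (1 + α * (ρ - 1) - ρ ^ α) / ((1 - α) * (ρ ^ α - 1)))

/-- `v(α) := c_α^{(∞)}(2)`, with the continuous extension at `α = 1`. -/
noncomputable def vFun (α : ℝ) : ℝ :=
  if α = 1 then Real.log (2 / (Real.exp 1 * Real.log 2))
  else Real.log ((α - 1) / ((2 : ℝ) ^ α - 2)) - α / (α - 1) * Real.log (α / ((2 : ℝ) ^ α - 1))

/-- `n*`: the maximal `i ∈ {1,…,m−1}` with `P i ≥ (m−i)⁻¹ ∑_{j=i+1}^n P j`. -/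
noncomputable def nStar (n m : ℕ) (P : ℕ → ℝ) : ℕ :=
  sSup {i : ℕ | 1 ≤ i ∧ i ≤ m - 1 ∧
    ((m : ℝ) - (i : ℝ))⁻¹ * ∑ j ∈ Finset.Icc (i + 1) n, P j ≤ P i}

/-- The pmf of `X̃_m` on `{1,…,m}`, built from a nonincreasing pmf `P` on `{1,…,n}`. -/
noncomputable def tildeX (n m : ℕ) (P : ℕ → ℝ) : ℕ → ℝ := fun i =>
  if P 1 < 1 / (m : ℝ) then 1 / (m : ℝ)
  else if i ≤ nStar n m P then P i
  else ((m : ℝ) - (nStar n m P : ℝ))⁻¹ * ∑ j ∈ Finset.Icc (nStar n m P + 1) n, P j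

/-- The pmf of `Ỹ_m` on `{1,…,m}`. -/
def tildeY (n m : ℕ) (P : ℕ → ℝ) : ℕ → ℝ := fun i =>
  if i = 1 then ∑ j ∈ Finset.Icc 1 (n - m + 1), P j else P (n - m + i)

/-- The pmf of `f(X)`: `(push n f P) j = ∑_{i ∈ {1,…,n}, f i = j} P i`. -/
def push (n : ℕ) (f : ℕ → ℕ) (P : ℕ → ℝ) : ℕ → ℝ := fun j =>
  ∑ i ∈ (Finset.Icc 1 n).filter (fun i => f i = j), P i

/-- The set `{1,…,n}^k` of source sequences of length `k`. -/
def seqSet (n k : ℕ) : Finset (Fin k → ℕ) := Fintype.piFinset fun _ => Finset.Icc 1 n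

/-- Product (i.i.d.) probability of a sequence. -/
def prodP (k : ℕ) (P : ℕ → ℝ) (x : Fin k → ℕ) : ℝ := ∏ i, P (x i)

/-- `g` is a ranking function for the i.i.d. vector on `{1,…,n}^k` with marginal `P`:
a bijection onto `{1,…,n^k}` which assigns smaller ranks to larger masses. -/
def IsRanking (n k : ℕ) (P : ℕ → ℝ) (g : (Fin k → ℕ) → ℕ) : Prop :=
  Set.BijOn g (↑(seqSet n k)) (Set.Icc 1 (n ^ k)) ∧
    ∀ x ∈ seqSet n k, ∀ y ∈ seqSet n k, prodP k P y < prodP k P x → g x < g y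

/-- The `ρ`-th guessing moment `E[g(Z^k)^ρ]`. -/
noncomputable def gmoment (n k : ℕ) (P : ℕ → ℝ) (g : (Fin k → ℕ) → ℕ) (ρ : ℝ) : ℝ :=
  ∑ x ∈ seqSet n k, prodP k P x * (g x : ℝ) ^ ρ

/-- Kraft inequality for a `D`-ary length function on `{1,…,n}^k`. -/
def Kraft (n k D : ℕ) (ℓ : (Fin k → ℕ) → ℕ) : Prop :=
  ∑ x ∈ seqSet n k, (D : ℝ) ^ (-(ℓ x : ℝ)) ≤ 1

/-- Scaled cumulant generating function `Λ_k(ρ)` of the codeword lengths (base-`D` log). -/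
noncomputable def cgf (n k D : ℕ) (P : ℕ → ℝ) (ℓ : (Fin k → ℕ) → ℕ) (ρ : ℝ) : ℝ :=
  (1 / (k : ℝ)) * Real.logb D (∑ x ∈ seqSet n k, prodP k P x * (D : ℝ) ^ (ρ * (ℓ x : ℝ)))

/-- `i_β` of Lemma 2. -/
noncomputable def iBeta (n : ℕ) (ρ β : ℝ) : ℕ := Nat.floor ((1 - (n : ℝ) * β) / ((ρ - 1) * β))

/-- The pmf `Q_β` of Lemma 2. -/
noncomputable def Qbeta (n : ℕ) (ρ β : ℝ) : ℕ → ℝ := fun j =>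
  if j ≤ iBeta n ρ β then ρ * β
  else if j = iBeta n ρ β + 1 then
    1 - ((n : ℝ) + (iBeta n ρ β : ℝ) * ρ - (iBeta n ρ β : ℝ) - 1) * β
  else β

theorem stmt0 (n : ℕ) (hn : 2 ≤ n) (ρ : ℝ) (hρ : 1 ≤ ρ)
    (P : ℕ → ℝ) (hP : IsPMF n P) (hPρ : RatioBdd n ρ P)
    (pmin : ℝ) (hpmin_le : ∀ i ∈ Finset.Icc 1 n, pmin ≤ P i)
    (hpmin_mem : ∃ i ∈ Finset.Icc 1 n, P i = pmin)
    (i0 : ℕ) (hi0 : i0 = Nat.floor ((1 - (n : ℝ) * pmin) / ((ρ - 1) * pmin)))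
    (Q : ℕ → ℝ)
    (hQ : ∀ j, Q j =
      if j ≤ i0 then ρ * pmin
      else if j = i0 + 1 then 1 - ((n : ℝ) + (i0 : ℝ) * ρ - (i0 : ℝ) - 1) * pmin
      else pmin) :
    (IsPMF n Q ∧ RatioBdd n ρ Q) ∧
      (∀ i ∈ Finset.Icc 1 n, ∀ j ∈ Finset.Icc 1 n, i ≤ j → Q j ≤ Q i) ∧
      (∀ j ∈ Finset.Icc 1 n, 0 < Q j) ∧
      MajorizedBy n P Q := by
  
  obtain ⟨hPpos, hPsum⟩ := hP
  obtain ⟨m0, hm0, hm0eq⟩ := hpmin_mem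
  have hp0 : 0 < pmin := hm0eq ▸ hPpos m0 hm0
  have hub : ∀ i ∈ Finset.Icc 1 n, P i ≤ ρ * pmin := fun i hi => hm0eq ▸ hPρ i hi m0 hm0
  have hcard : (Finset.Icc 1 n).card = n := by simp
  have hρp : pmin ≤ ρ * pmin := by nlinarith
  have hnp : (n : ℝ) * pmin ≤ 1 := by
    calc (n : ℝ) * pmin = ∑ _i ∈ Finset.Icc 1 n, pmin := by
          rw [Finset.sum_const, hcard, nsmul_eq_mul]
      _ ≤ ∑ i ∈ Finset.Icc 1 n, P i := Finset.sum_le_sum hpmin_le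
      _ = 1 := hPsum
  have hnρp : 1 ≤ (n : ℝ) * (ρ * pmin) := by
    calc (1 : ℝ) = ∑ i ∈ Finset.Icc 1 n, P i := hPsum.symm
      _ ≤ ∑ _i ∈ Finset.Icc 1 n, ρ * pmin := Finset.sum_le_sum hub
      _ = (n : ℝ) * (ρ * pmin) := by rw [Finset.sum_const, hcard, nsmul_eq_mul]
  have hρ1 : (0 : ℝ) ≤ ρ - 1 := by linarith
  have hA : (i0 : ℝ) * ((ρ - 1) * pmin) ≤ 1 - n * pmin := by
    rcases eq_or_lt_of_le hρ1 with h | h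
    · have hz : (ρ - 1) * pmin = 0 := by rw [← h, zero_mul]
      have : i0 = 0 := by rw [hi0, hz, div_zero, Nat.floor_zero]
      rw [this, hz]
      simpa using hnp
    · have hd : 0 < (ρ - 1) * pmin := mul_pos h hp0
      have hθ : (0 : ℝ) ≤ (1 - (n : ℝ) * pmin) / ((ρ - 1) * pmin) :=
        div_nonneg (by linarith) hd.le
      have hfl : (i0 : ℝ) ≤ (1 - (n : ℝ) * pmin) / ((ρ - 1) * pmin) := by
        rw [hi0]; exact Nat.floor_le hθ
      have := mul_le_mul_of_nonneg_right hfl hd.le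
      rwa [div_mul_cancel₀ _ hd.ne'] at this
  have hB : 1 - (n : ℝ) * pmin ≤ ((i0 : ℝ) + 1) * ((ρ - 1) * pmin) := by
    rcases eq_or_lt_of_le hρ1 with h | h
    · have hz : (ρ - 1) * pmin = 0 := by rw [← h, zero_mul]
      rw [hz, mul_zero]
      nlinarith
    · have hd : 0 < (ρ - 1) * pmin := mul_pos h hp0
      have hfl : (1 - (n : ℝ) * pmin) / ((ρ - 1) * pmin) < (i0 : ℝ) + 1 := by
        rw [hi0]; exact Nat.lt_floor_add_one _
      have := mul_le_mul_of_nonneg_right hfl.le hd.le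
      rwa [div_mul_cancel₀ _ hd.ne'] at this
  have hQhi : ∀ j, j ≤ i0 → Q j = ρ * pmin := fun j hj => by rw [hQ, if_pos hj]
  have hQmid : Q (i0 + 1) = 1 - ((n : ℝ) + (i0 : ℝ) * ρ - (i0 : ℝ) - 1) * pmin := by
    rw [hQ, if_neg (by omega), if_pos rfl]
  have hQlo : ∀ j, i0 + 2 ≤ j → Q j = pmin := fun j hj => by
    rw [hQ, if_neg (by omega), if_neg (by omega)]
  have hmid_ge : pmin ≤ Q (i0 + 1) := by rw [hQmid]; nlinarith [hA]
  have hmid_le : Q (i0 + 1) ≤ ρ * pmin := by rw [hQmid]; nlinarith [hB]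
  have hQub : ∀ j, Q j ≤ ρ * pmin := by
    intro j
    rcases lt_trichotomy j (i0 + 1) with h | h | h
    · rw [hQhi j (by omega)]
    · exact h ▸ hmid_le
    · rw [hQlo j (by omega)]; exact hρp
  have hQlb : ∀ j, pmin ≤ Q j := by
    intro j
    rcases lt_trichotomy j (i0 + 1) with h | h | h
    · rw [hQhi j (by omega)]; exact hρp
    · exact h ▸ hmid_ge
    · rw [hQlo j (by omega)]
  have hdec : ∀ i j : ℕ, i ≤ j → Q j ≤ Q i := by
    intro i j hij
    rcases le_or_gt i i0 with h | h
    · rw [hQhi i h]; exact hQub j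
    · rcases le_or_gt j (i0 + 1) with h2 | h2
      · have : i = j := by omega
        rw [this]
      · rw [hQlo j (by omega)]; exact hQlb i
  have hIoc : ∀ m : ℕ, Finset.Icc 1 m = Finset.Ioc 0 m := by
    intro m; ext x; simp [Nat.lt_iff_add_one_le]
  have hQsum : ∑ j ∈ Finset.Icc 1 n, Q j = 1 := by
    rcases le_or_gt n i0 with hni | hni
    · have heq : ∀ j ∈ Finset.Icc 1 n, Q j = ρ * pmin := fun j hj =>
        hQhi j (le_trans (Finset.mem_Icc.mp hj).2 hni)
      rw [Finset.sum_congr rfl heq, Finset.sum_const, hcard, nsmul_eq_mul]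
      have hni' : (n : ℝ) ≤ (i0 : ℝ) := by exact_mod_cast hni
      have h2 : (n : ℝ) * ((ρ - 1) * pmin) ≤ (i0 : ℝ) * ((ρ - 1) * pmin) :=
        mul_le_mul_of_nonneg_right hni' (by positivity)
      nlinarith [hnρp]
    · have h1 : i0 + 1 ≤ n := hni
      have hsplit : ∑ j ∈ Finset.Ioc 0 (i0 + 1), Q j + ∑ j ∈ Finset.Ioc (i0 + 1) n, Q j
          = ∑ j ∈ Finset.Ioc 0 n, Q j :=
        Finset.sum_Ioc_consecutive Q (by omega) h1
      have htop : ∑ j ∈ Finset.Ioc 0 (i0 + 1), Q j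
          = ∑ j ∈ Finset.Ioc 0 i0, Q j + Q (i0 + 1) :=
        Finset.sum_Ioc_succ_top (by omega) Q
      have hhead : ∑ j ∈ Finset.Ioc 0 i0, Q j = (i0 : ℝ) * (ρ * pmin) := by
        rw [Finset.sum_congr rfl (fun j hj => hQhi j (Finset.mem_Ioc.mp hj).2),
          Finset.sum_const, Nat.card_Ioc, nsmul_eq_mul]
        norm_num
      have htail : ∑ j ∈ Finset.Ioc (i0 + 1) n, Q j = ((n : ℝ) - (i0 : ℝ) - 1) * pmin := by
        rw [Finset.sum_congr rfl (fun j hj => hQlo j (by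
          have := (Finset.mem_Ioc.mp hj).1; omega)),
          Finset.sum_const, Nat.card_Ioc, nsmul_eq_mul, Nat.cast_sub h1]
        push_cast
        ring
      rw [hIoc, ← hsplit, htop, hhead, htail, hQmid]
      ring
  have hQpos : ∀ j, 0 < Q j := fun j => lt_of_lt_of_le hp0 (hQlb j)
  have hTlb : ∀ k, k ≤ n → ∀ s : Finset ℕ, s ⊆ Finset.Icc 1 n → s.card = k →
      ∑ i ∈ s, P i ≤ ∑ j ∈ Finset.Icc 1 k, Q j := by
    intro k hkn s hs hsc
    rcases le_or_gt k i0 with h | h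
    · have h1 : ∑ i ∈ s, P i ≤ (k : ℝ) * (ρ * pmin) := by
        calc ∑ i ∈ s, P i ≤ ∑ _i ∈ s, ρ * pmin :=
              Finset.sum_le_sum (fun i hi => hub i (hs hi))
          _ = (k : ℝ) * (ρ * pmin) := by rw [Finset.sum_const, hsc, nsmul_eq_mul]
      have h2 : ∑ j ∈ Finset.Icc 1 k, Q j = (k : ℝ) * (ρ * pmin) := by
        rw [Finset.sum_congr rfl
            (fun j hj => hQhi j (le_trans (Finset.mem_Icc.mp hj).2 h)),
          Finset.sum_const, Nat.card_Icc, nsmul_eq_mul]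
        norm_num
      linarith
    · have hcomp_card : (Finset.Icc 1 n \ s).card = n - k := by
        rw [Finset.card_sdiff_of_subset hs, hcard, hsc]
      have hcomp : ((n : ℝ) - (k : ℝ)) * pmin ≤ ∑ i ∈ Finset.Icc 1 n \ s, P i := by
        calc ((n : ℝ) - (k : ℝ)) * pmin
            = ∑ _i ∈ Finset.Icc 1 n \ s, pmin := by
              rw [Finset.sum_const, hcomp_card, nsmul_eq_mul, Nat.cast_sub hkn]
          _ ≤ ∑ i ∈ Finset.Icc 1 n \ s, P i :=
              Finset.sum_le_sum (fun i hi => hpmin_le i (Finset.mem_sdiff.mp hi).1)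
      have hsd : ∑ i ∈ Finset.Icc 1 n \ s, P i + ∑ i ∈ s, P i = ∑ i ∈ Finset.Icc 1 n, P i :=
        Finset.sum_sdiff hs
      have h1 : ∑ i ∈ s, P i ≤ 1 - ((n : ℝ) - (k : ℝ)) * pmin := by
        rw [hPsum] at hsd; linarith
      have hsplit : ∑ j ∈ Finset.Ioc 0 k, Q j + ∑ j ∈ Finset.Ioc k n, Q j
          = ∑ j ∈ Finset.Ioc 0 n, Q j :=
        Finset.sum_Ioc_consecutive Q (by omega) hkn
      have htail : ∑ j ∈ Finset.Ioc k n, Q j = ((n : ℝ) - (k : ℝ)) * pmin := by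
        rw [Finset.sum_congr rfl (fun j hj => hQlo j (by
          have := (Finset.mem_Ioc.mp hj).1; omega)),
          Finset.sum_const, Nat.card_Ioc, nsmul_eq_mul, Nat.cast_sub hkn]
      have hone : ∑ j ∈ Finset.Ioc 0 n, Q j = 1 := by rw [← hIoc]; exact hQsum
      have h2 : ∑ j ∈ Finset.Icc 1 k, Q j = 1 - ((n : ℝ) - (k : ℝ)) * pmin := by
        rw [hIoc]; linarith
      linarith
  refine ⟨⟨⟨fun j _ => hQpos j, hQsum⟩, fun i _ j hj => ?_⟩,
    fun i _ j _ hij => hdec i j hij, fun j _ => hQpos j, ?_⟩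
  · calc Q i ≤ ρ * pmin := hQub i
      _ ≤ ρ * Q j := mul_le_mul_of_nonneg_left (hQlb j) (by linarith)
  · intro k hk1 hk2
    have hkn : k ≤ n := by omega
    have hbdd : BddAbove ((fun s : Finset ℕ => ∑ i ∈ s, Q i) ''
        {s | s ⊆ Finset.Icc 1 n ∧ s.card = k}) := by
      refine ⟨1, ?_⟩
      rintro x ⟨s, ⟨hs, _⟩, rfl⟩
      calc ∑ i ∈ s, Q i ≤ ∑ i ∈ Finset.Icc 1 n, Q i :=
            Finset.sum_le_sum_of_subset_of_nonneg hs (fun i _ _ => (hQpos i).le)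
        _ = 1 := hQsum
    have hmemQ : ∑ j ∈ Finset.Icc 1 k, Q j ∈ (fun s : Finset ℕ => ∑ i ∈ s, Q i) ''
        {s | s ⊆ Finset.Icc 1 n ∧ s.card = k} :=
      ⟨Finset.Icc 1 k, ⟨Finset.Icc_subset_Icc_right hkn, by simp⟩, rfl⟩
    have hle : ∑ j ∈ Finset.Icc 1 k, Q j ≤ topSum n Q k := le_csSup hbdd hmemQ
    have hTnn : 0 ≤ ∑ j ∈ Finset.Icc 1 k, Q j :=
      Finset.sum_nonneg fun j _ => (hQpos j).le
    apply Real.sSup_le _ (le_trans hTnn hle)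
    rintro x ⟨s, ⟨hs, hsc⟩, rfl⟩
    exact le_trans (hTlb k hkn s hs hsc) hle
end

section
/- Let ρ > 1, α > 0, and n ≥ 2 an integer. For β ∈ Γ_ρ^{(n)} := [1/(1+(n−1)ρ), 1/n], define i_β := ⌊(1 − nβ)/((ρ−1)β)⌋ and let Q_β be the probability mass function on {1,…,n} with Q_β(j) = ρβ for j ∈ {1,…,i_β}, Q_β(i_β+1) = 1 − (n + i_β·ρ − i_β − 1)β, and Q_β(j) = β for j ∈ {i_β+2,…,n}. Then Q_β ∈ P_n(ρ), and min over P ∈ P_n(ρ) of H_α(P) equals min over β ∈ Γ_ρ^{(n)} of H_α(Q_β). -/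
open Finset

/-!
If `P ∈ 𝒫_n(ρ)` has minimal mass `β`, then `β ∈ Γ_ρ^{(n)}` and all masses of `P` lie in
`[β, ρβ]`. Among the vectors in this box with total mass `1`, `Q_β` puts as many coordinates as
possible at the endpoints, with a single coordinate `q ∈ [β, ρβ)` in between; it majorizes `P`.
Concretely, a concave `f` on `[β, ρβ]` lies above its piecewise-linear interpolation at `β, q, ρβ`,
and comparing the sums of that interpolation gives `∑ f(Q_β) ≤ ∑ f(P)`. Applied to `x ^ α`
(`α < 1`), `-x ^ α` (`α > 1`) and `-x log x` this yields `H_α(Q_β) ≤ H_α(P)`; since each `Q_β` lies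
in `𝒫_n(ρ)`, the two infima agree.
-/

theorem ConcaveOn.chord_le {s : Set ℝ} {f : ℝ → ℝ} (hf : ConcaveOn ℝ s f) {x y z : ℝ}
    (hx : x ∈ s) (hz : z ∈ s) (hxy : x ≤ y) (hyz : y ≤ z) :
    (z - y) * f x + (y - x) * f z ≤ (z - x) * f y := by
  rcases hxy.eq_or_lt with rfl | hxy
  · linarith
  rcases hyz.eq_or_lt with rfl | hyz
  · linarith
  have := hf.neg.secant_mono_aux1 hx hz hxy hyz
  simp only [Pi.neg_apply] at this
  linarith

/-- The piecewise-linear interpolation of `f` at the nodes `a ≤ q < b`, a concave function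
lying below `f` on `[a, b]`. -/
theorem ConcaveOn.exists_piecewise_linear_minorant {f : ℝ → ℝ} {a q b : ℝ}
    (hf : ConcaveOn ℝ (Set.Icc a b) f) (haq : a ≤ q) (hqb : q < b) :
    ∃ c l : ℝ, 0 ≤ l ∧ f b = f q + c * (b - q) ∧ f a = f q + c * (a - q) - l * (q - a) ∧
      ∀ x ∈ Set.Icc a b, f q + c * (x - q) - l * max (q - x) 0 ≤ f x := by
  have hb : b ∈ Set.Icc a b := ⟨by linarith, le_rfl⟩
  have hq : q ∈ Set.Icc a b := ⟨haq, hqb.le⟩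
  have hbq : 0 < b - q := by linarith
  obtain ⟨c, hc⟩ : ∃ c, c * (b - q) = f b - f q := ⟨_, div_mul_cancel₀ _ hbq.ne'⟩
  have right_branch : ∀ x ∈ Set.Icc a b, q ≤ x → f q + c * (x - q) ≤ f x := by
    intro x hx hqx
    refine le_of_mul_le_mul_left ?_ hbq
    linear_combination hf.chord_le hq hb hqx hx.2 + (x - q) * hc
  rcases haq.eq_or_lt with rfl | haq
  · refine ⟨c, 0, le_rfl, by linarith, by ring, fun x hx => ?_⟩
    simpa [max_eq_right (sub_nonpos.mpr hx.1)] using right_branch x hx hx.1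
  have ha : a ∈ Set.Icc a b := ⟨le_rfl, by linarith⟩
  have hqa : 0 < q - a := by linarith
  obtain ⟨d, hd⟩ : ∃ d, d * (q - a) = f q - f a := ⟨_, div_mul_cancel₀ _ hqa.ne'⟩
  refine ⟨c, d - c, ?_, by linarith, by linear_combination hd, fun x hx => ?_⟩
  · have := hf.slope_anti_adjacent ha hb haq hqb
    rw [← hc, ← hd, mul_div_cancel_right₀ _ hbq.ne', mul_div_cancel_right₀ _ hqa.ne'] at this
    linarith
  rcases le_total x q with hxq | hqx
  · rw [max_eq_left (sub_nonneg.mpr hxq)]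
    refine le_of_mul_le_mul_left ?_ hqa
    linear_combination hf.chord_le ha hq hx.1 hxq + (x - q) * hd
  · simpa [max_eq_right (sub_nonpos.mpr hqx)] using right_branch x hx hqx

theorem sum_max_sub_le_of_sum_eq {ι : Type*} (s : Finset ι) (x : ι → ℝ) {a q b : ℝ} (k : ℕ)
    (haq : a ≤ q) (hqb : q ≤ b) (hx : ∀ i ∈ s, x i ∈ Set.Icc a b)
    (hsum : ∑ i ∈ s, x i = k * b + q + (#s - 1 - k) * a) :
    ∑ i ∈ s, max (q - x i) 0 ≤ (#s - 1 - k) * (q - a) := by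
  classical
  set A := s.filter (fun i => q ≤ x i)
  set B := s.filter (fun i => ¬ q ≤ x i)
  have hcard : (#A : ℝ) + #B = #s := by exact_mod_cast card_filter_add_card_filter_not _
  have hB : ∑ i ∈ s, max (q - x i) 0 = ∑ i ∈ B, (q - x i) := by
    rw [sum_filter]
    refine sum_congr rfl fun i _ => ?_
    split_ifs with h
    · exact max_eq_right (by linarith)
    · exact max_eq_left (by linarith [not_le.mp h])
  rw [hB]
  rcases le_or_gt (k + 1) #A with hA | hA
  · have hA : (k : ℝ) + 1 ≤ #A := by exact_mod_cast hA
    calc ∑ i ∈ B, (q - x i) ≤ ∑ i ∈ B, (q - a) :=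
          sum_le_sum fun i hi => by linarith [(hx i (mem_filter.mp hi).1).1]
      _ = #B * (q - a) := by rw [sum_const, nsmul_eq_mul]
      _ ≤ (#s - 1 - k) * (q - a) := by gcongr; linarith
  · have hA : (#A : ℝ) ≤ k := by exact_mod_cast Nat.lt_succ_iff.mp hA
    have hAb : ∑ i ∈ A, x i ≤ #A * b := by
      simpa using sum_le_sum fun i hi => (hx i (mem_filter.mp hi).1).2
    have hsplit : ∑ i ∈ A, x i + ∑ i ∈ B, x i = ∑ i ∈ s, x i :=
      sum_filter_add_sum_filter_not s _ x
    have hBq : (#B : ℝ) * q = #s * q - #A * q := by rw [← hcard]; ring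
    rw [sum_sub_distrib, sum_const, nsmul_eq_mul]
    linarith [mul_nonneg (sub_nonneg.mpr hA) (sub_nonneg.mpr hqb)]

theorem ConcaveOn.sum_extremal_le_sum {ι : Type*} {s : Finset ι} {x : ι → ℝ} {f : ℝ → ℝ}
    {a q b : ℝ} {k : ℕ} (hf : ConcaveOn ℝ (Set.Icc a b) f) (haq : a ≤ q) (hqb : q < b)
    (hx : ∀ i ∈ s, x i ∈ Set.Icc a b) (hsum : ∑ i ∈ s, x i = k * b + q + (#s - 1 - k) * a) :
    k * f b + f q + (#s - 1 - k) * f a ≤ ∑ i ∈ s, f (x i) := by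
  obtain ⟨c, l, hl, hfb, hfa, hle⟩ := hf.exists_piecewise_linear_minorant haq hqb
  have hmax := sum_max_sub_le_of_sum_eq s x k haq hqb.le hx hsum
  calc k * f b + f q + (#s - 1 - k) * f a
      = #s * f q + c * (∑ i ∈ s, x i - #s * q) - l * ((#s - 1 - k) * (q - a)) := by
        rw [hfb, hfa, hsum]; ring
    _ ≤ #s * f q + c * (∑ i ∈ s, x i - #s * q) - l * ∑ i ∈ s, max (q - x i) 0 := by gcongr
    _ = ∑ i ∈ s, (f q + c * (x i - q) - l * max (q - x i) 0) := by
        simp only [sum_sub_distrib, sum_add_distrib, ← mul_sum, sum_const, nsmul_eq_mul]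
    _ ≤ ∑ i ∈ s, f (x i) := sum_le_sum fun i hi => hle _ (hx i hi)

theorem renyiH_le_of_forall_concaveOn {n : ℕ} {α : ℝ} {s : Set ℝ} {P Q : ℕ → ℝ} (hn : 1 ≤ n)
    (hα : 0 < α) (hs : Convex ℝ s) (hs0 : s ⊆ Set.Ioi 0) (hP : ∀ i ∈ Icc 1 n, P i ∈ s)
    (hQ : ∀ i ∈ Icc 1 n, Q i ∈ s)
    (h : ∀ f : ℝ → ℝ, ConcaveOn ℝ s f → ∑ i ∈ Icc 1 n, f (Q i) ≤ ∑ i ∈ Icc 1 n, f (P i)) :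
    renyiH n α Q ≤ renyiH n α P := by
  have hs' : s ⊆ Set.Ici 0 := fun _ hx => Set.mem_Ici.mpr (hs0 hx).le
  have hpos : ∀ R : ℕ → ℝ, (∀ i ∈ Icc 1 n, R i ∈ s) → 0 < ∑ i ∈ Icc 1 n, R i ^ α :=
    fun R hR => sum_pos (fun i hi => Real.rpow_pos_of_pos (hs0 (hR i hi)) α) ⟨1, by simpa⟩
  unfold renyiH
  split_ifs with hα1
  · simpa [Real.negMulLog] using h _ (Real.concaveOn_negMulLog.subset hs' hs)
  rcases lt_or_gt_of_ne hα1 with hlt | hgt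
  · refine mul_le_mul_of_nonneg_left ?_ (inv_nonneg.mpr (by linarith))
    exact Real.log_le_log (hpos Q hQ) (h _ ((Real.concaveOn_rpow hα.le hlt.le).subset hs' hs))
  · refine mul_le_mul_of_nonpos_left ?_ (inv_nonpos.mpr (by linarith))
    have := h _ ((convexOn_rpow hgt.le).neg.subset hs' hs)
    simp only [Pi.neg_apply, sum_neg_distrib, neg_le_neg_iff] at this
    exact Real.log_le_log (hpos P hP) this

/-- The interval `Γ_ρ^{(n)}` of admissible minimal masses `β`. -/
def betaInterval (n : ℕ) (ρ : ℝ) : Set ℝ := Set.Icc (1 / (1 + ((n : ℝ) - 1) * ρ)) (1 / (n : ℝ))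

section Qbeta

variable {n : ℕ} {ρ β : ℝ}

theorem sum_Qbeta (φ : ℝ → ℝ) (h : iBeta n ρ β < n) :
    ∑ j ∈ Icc 1 n, φ (Qbeta n ρ β j) = iBeta n ρ β * φ (ρ * β)
      + φ (Qbeta n ρ β (iBeta n ρ β + 1)) + ((n : ℝ) - 1 - iBeta n ρ β) * φ β := by
  set k := iBeta n ρ β
  have hlow : ∑ j ∈ Ioc 0 k, φ (Qbeta n ρ β j) = k * φ (ρ * β) := by
    rw [sum_congr rfl fun j hj => by rw [Qbeta, if_pos (mem_Ioc.mp hj).2], sum_const,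
      nsmul_eq_mul, Nat.card_Ioc, Nat.sub_zero]
  have hhigh : ∑ j ∈ Ioc (k + 1) n, φ (Qbeta n ρ β j) = ((n : ℝ) - 1 - k) * φ β := by
    rw [sum_congr rfl fun j hj => by rw [Qbeta, if_neg (by grind), if_neg (by grind)],
      sum_const, nsmul_eq_mul, Nat.card_Ioc, Nat.cast_sub h, Nat.cast_add_one]
    ring
  have hIcc : Icc 1 n = Ioc 0 n := Icc_add_one_left_eq_Ioc 0 n
  rw [hIcc, ← sum_Ioc_consecutive _ (Nat.zero_le k) h.le,
    ← sum_Ioc_consecutive _ k.le_succ h, Nat.Ioc_succ_singleton, sum_singleton, hlow, hhigh,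
    add_assoc]

theorem one_add_cast_sub_one_mul_pos (hn : 1 ≤ n) (hρ : 0 ≤ ρ) : 0 < 1 + ((n : ℝ) - 1) * ρ := by
  have : (1 : ℝ) ≤ n := by exact_mod_cast hn
  exact add_pos_of_pos_of_nonneg one_pos (mul_nonneg (by linarith) hρ)

theorem pos_of_mem_betaInterval (hn : 1 ≤ n) (hρ : 0 ≤ ρ) (hβ : β ∈ betaInterval n ρ) :
    0 < β :=
  (one_div_pos.mpr (one_add_cast_sub_one_mul_pos hn hρ)).trans_le hβ.1

theorem Qbeta_iBeta_succ_sub (hρ : ρ ≠ 1) (hβ : β ≠ 0) :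
    Qbeta n ρ β (iBeta n ρ β + 1) - β
      = ((1 - n * β) / ((ρ - 1) * β) - iBeta n ρ β) * ((ρ - 1) * β) := by
  have : ρ - 1 ≠ 0 := sub_ne_zero.mpr hρ
  rw [Qbeta, if_neg (by omega), if_pos rfl]
  field_simp
  ring

theorem iBeta_lt (hn : 1 ≤ n) (hρ : 1 < ρ) (hβ : β ∈ betaInterval n ρ) : iBeta n ρ β < n := by
  have hD : 0 < (ρ - 1) * β := mul_pos (by linarith) (pos_of_mem_betaInterval hn (by linarith) hβ)
  have hlow : 1 ≤ β * (1 + ((n : ℝ) - 1) * ρ) :=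
    (div_le_iff₀ (one_add_cast_sub_one_mul_pos hn (by linarith))).mp hβ.1
  refine (Nat.floor_lt' (by omega)).mpr ?_
  rw [div_lt_iff₀ hD]
  nlinarith

theorem Qbeta_iBeta_succ_mem_Ico (hn : 1 ≤ n) (hρ : 1 < ρ) (hβ : β ∈ betaInterval n ρ) :
    Qbeta n ρ β (iBeta n ρ β + 1) ∈ Set.Ico β (ρ * β) := by
  have hβ0 := pos_of_mem_betaInterval hn (by linarith) hβ
  have hD : 0 < (ρ - 1) * β := mul_pos (by linarith) hβ0
  have hnβ : n * β ≤ 1 := by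
    have := (le_div_iff₀ (by positivity : (0 : ℝ) < n)).mp hβ.2
    linarith
  have hfloor : (iBeta n ρ β : ℝ) ≤ (1 - n * β) / ((ρ - 1) * β) :=
    Nat.floor_le (div_nonneg (by linarith) hD.le)
  have hfloor' : (1 - n * β) / ((ρ - 1) * β) < iBeta n ρ β + 1 := Nat.lt_floor_add_one _
  have hsub := Qbeta_iBeta_succ_sub (n := n) hρ.ne' hβ0.ne'
  constructor <;> nlinarith

theorem Qbeta_mem_Icc (hn : 1 ≤ n) (hρ : 1 < ρ) (hβ : β ∈ betaInterval n ρ) (j : ℕ) :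
    Qbeta n ρ β j ∈ Set.Icc β (ρ * β) := by
  have hβ0 := pos_of_mem_betaInterval hn (by linarith) hβ
  have hmid := Qbeta_iBeta_succ_mem_Ico hn hρ hβ
  unfold Qbeta at hmid ⊢
  split_ifs with h₁ h₂
  · exact ⟨by nlinarith, le_rfl⟩
  · simpa [h₂] using Set.Ico_subset_Icc_self hmid
  · exact ⟨le_rfl, by nlinarith⟩

theorem sum_Qbeta_eq_one (hn : 1 ≤ n) (hρ : 1 < ρ) (hβ : β ∈ betaInterval n ρ) :
    ∑ j ∈ Icc 1 n, Qbeta n ρ β j = 1 := by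
  rw [sum_Qbeta (fun x => x) (iBeta_lt hn hρ hβ), Qbeta, if_neg (by omega), if_pos rfl]
  ring

theorem Qbeta_isPMF (hn : 1 ≤ n) (hρ : 1 < ρ) (hβ : β ∈ betaInterval n ρ) :
    IsPMF n (Qbeta n ρ β) :=
  ⟨fun j _ => (pos_of_mem_betaInterval hn (by linarith) hβ).trans_le (Qbeta_mem_Icc hn hρ hβ j).1,
    sum_Qbeta_eq_one hn hρ hβ⟩

theorem Qbeta_ratioBdd (hn : 1 ≤ n) (hρ : 1 < ρ) (hβ : β ∈ betaInterval n ρ) :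
    RatioBdd n ρ (Qbeta n ρ β) := fun i _ j _ =>
  (Qbeta_mem_Icc hn hρ hβ i).2.trans
    (mul_le_mul_of_nonneg_left (Qbeta_mem_Icc hn hρ hβ j).1 (by linarith))

end Qbeta

theorem exists_mem_betaInterval_of_ratioBdd {n : ℕ} {ρ : ℝ} {P : ℕ → ℝ} (hn : 1 ≤ n)
    (hP : IsPMF n P) (hR : RatioBdd n ρ P) :
    ∃ β ∈ betaInterval n ρ, ∀ i ∈ Icc 1 n, P i ∈ Set.Icc β (ρ * β) := by
  obtain ⟨hpos, hsum⟩ := hP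
  obtain ⟨j, hj, hmin⟩ := exists_min_image (Icc 1 n) P ⟨1, by simpa⟩
  have hcard : (#(Icc 1 n) : ℝ) = n := by simp
  have hρ : 1 ≤ ρ := le_of_mul_le_mul_right (by simpa using hR j hj j hj) (hpos j hj)
  refine ⟨P j, ⟨?_, ?_⟩, fun i hi => ⟨hmin i hi, hR i hi j hj⟩⟩
  · have hexcess : ∑ i ∈ Icc 1 n, (P i - P j) ≤ ((n : ℝ) - 1) * ((ρ - 1) * P j) := by
      rw [← sum_erase (f := fun i => P i - P j) _ (sub_self (P j))]
      calc ∑ i ∈ (Icc 1 n).erase j, (P i - P j)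
          ≤ ∑ i ∈ (Icc 1 n).erase j, (ρ - 1) * P j :=
            sum_le_sum fun i hi => by linarith [hR i (mem_of_mem_erase hi) j hj]
        _ = ((n : ℝ) - 1) * ((ρ - 1) * P j) := by
            rw [sum_const, nsmul_eq_mul, card_erase_of_mem hj, Nat.cast_sub (by simpa using hn),
              hcard, Nat.cast_one]
    rw [sum_sub_distrib, hsum, sum_const, nsmul_eq_mul, hcard] at hexcess
    rw [div_le_iff₀ (one_add_cast_sub_one_mul_pos hn (by linarith))]
    linarith
  · have := card_nsmul_le_sum (Icc 1 n) P (P j) hmin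
    rw [nsmul_eq_mul, hcard, hsum] at this
    rw [le_div_iff₀ (by positivity)]
    linarith

theorem renyiH_Qbeta_le {n : ℕ} {ρ α β : ℝ} {P : ℕ → ℝ} (hn : 1 ≤ n) (hρ : 1 < ρ) (hα : 0 < α)
    (hβ : β ∈ betaInterval n ρ) (hP : ∑ i ∈ Icc 1 n, P i = 1)
    (hPβ : ∀ i ∈ Icc 1 n, P i ∈ Set.Icc β (ρ * β)) :
    renyiH n α (Qbeta n ρ β) ≤ renyiH n α P := by
  have hβ0 := pos_of_mem_betaInterval hn (by linarith) hβ
  have hk := iBeta_lt hn hρ hβ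
  obtain ⟨hq₁, hq₂⟩ := Qbeta_iBeta_succ_mem_Ico hn hρ hβ
  refine renyiH_le_of_forall_concaveOn hn hα (convex_Icc _ _)
    (fun x hx => hβ0.trans_le hx.1) hPβ (fun j _ => Qbeta_mem_Icc hn hρ hβ j) fun f hf => ?_
  have hPsum : ∑ i ∈ Icc 1 n, P i = iBeta n ρ β * (ρ * β) + Qbeta n ρ β (iBeta n ρ β + 1)
      + (#(Icc 1 n) - 1 - iBeta n ρ β) * β := by
    have hQ := sum_Qbeta (fun x => x) hk
    rw [sum_Qbeta_eq_one hn hρ hβ] at hQ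
    rwa [hP, Nat.card_Icc, add_tsub_cancel_right]
  simpa [sum_Qbeta f hk] using hf.sum_extremal_le_sum hq₁ hq₂ hPβ hPsum

theorem stmt1 (n : ℕ) (hn : 2 ≤ n) (ρ α : ℝ) (hρ : 1 < ρ) (hα : 0 < α) :
    (∀ β ∈ Set.Icc (1 / (1 + ((n : ℝ) - 1) * ρ)) (1 / (n : ℝ)),
        IsPMF n (Qbeta n ρ β) ∧ RatioBdd n ρ (Qbeta n ρ β)) ∧
      sInf (renyiH n α '' {P | IsPMF n P ∧ RatioBdd n ρ P}) =
        sInf ((fun β => renyiH n α (Qbeta n ρ β)) ''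
          Set.Icc (1 / (1 + ((n : ℝ) - 1) * ρ)) (1 / (n : ℝ))) := by
  have hn : 1 ≤ n := by omega
  have hQ : ∀ β ∈ betaInterval n ρ, IsPMF n (Qbeta n ρ β) ∧ RatioBdd n ρ (Qbeta n ρ β) :=
    fun β hβ => ⟨Qbeta_isPMF hn hρ hβ, Qbeta_ratioBdd hn hρ hβ⟩
  refine ⟨hQ, csInf_eq_csInf_of_forall_exists_le ?_ ?_⟩
  · rintro _ ⟨P, ⟨hP, hR⟩, rfl⟩
    obtain ⟨β, hβ, hPβ⟩ := exists_mem_betaInterval_of_ratioBdd hn hP hR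
    exact ⟨_, ⟨β, hβ, rfl⟩, renyiH_Qbeta_le hn hρ hα hβ hP.2 hPβ⟩
  · rintro _ ⟨β, hβ, rfl⟩
    exact ⟨_, ⟨Qbeta n ρ β, hQ β hβ, rfl⟩, le_rfl⟩
end

section
/- For ρ > 1 and α > 0, define c_α^{(n)}(ρ) := log n − min_{P ∈ P_n(ρ)} H_α(P) for integers n ≥ 2, and c_α^{(1)}(ρ) := 0. Then for every n ∈ ℕ: (i) 0 ≤ c_α^{(n)}(ρ) ≤ log ρ; (ii) c_α^{(n)}(ρ) ≤ c_α^{(2n)}(ρ); and (iii) for fixed n and ρ, the map α ↦ c_α^{(n)}(ρ) is monotonically increasing on (0,∞). -/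
open Finset

/-!
Writing `K(t) = log ∑ P_i^{1+t}` for the cumulant generating function of `log P(X)`, one has
`H_α(P) = -K(α-1)/(α-1)`, and `H_1(P) = -K'(0)`. Since `K` is convex with `K(0) = 0`, its slope
`K(t)/t` from the origin increases with `t`, so `H_α` decreases in `α`; this gives (iii). For (i), the
uniform distribution has entropy `log n`, and a mass function in `𝒫_n(ρ)` has all masses at most
`ρ/n`, which forces `H_α(P) ≥ log n - log ρ`. For (ii), splitting every mass of `P ∈ 𝒫_n(ρ)` into two
equal halves gives an element of `𝒫_{2n}(ρ)` whose entropy is `H_α(P) + log 2`.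
-/

open Real

section CumulantSlope

variable {ι : Type*} {s : Finset ι} {p : ι → ℝ}

/-- The slope `K(t)/t` of the cumulant generating function `K(t) = log ∑ p^(1+t)` of `log p`,
extended at `t = 0` by `K'(0) = ∑ p log p`. -/
noncomputable def cumulantSlope (s : Finset ι) (p : ι → ℝ) (t : ℝ) : ℝ :=
  if t = 0 then ∑ i ∈ s, p i * log (p i) else log (∑ i ∈ s, p i ^ (1 + t)) / t

theorem sum_rpow_one_add (hp : ∀ i ∈ s, 0 < p i) (t : ℝ) :
    ∑ i ∈ s, p i ^ (1 + t) = ∑ i ∈ s, p i * p i ^ t :=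
  Finset.sum_congr rfl fun i hi => by rw [rpow_add (hp i hi), rpow_one]

theorem mul_sum_mul_log_le_log_sum_rpow (hp : ∀ i ∈ s, 0 < p i) (hs : ∑ i ∈ s, p i = 1)
    (t : ℝ) : t * ∑ i ∈ s, p i * log (p i) ≤ log (∑ i ∈ s, p i ^ (1 + t)) := by
  have jensen := strictConcaveOn_log_Ioi.concaveOn.le_map_sum (p := fun i => p i ^ t)
    (fun i hi => (hp i hi).le) hs (fun i hi => rpow_pos_of_pos (hp i hi) t)
  simp only [smul_eq_mul] at jensen
  rw [sum_rpow_one_add hp, Finset.mul_sum]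
  refine le_of_eq_of_le (Finset.sum_congr rfl fun i hi => ?_) jensen
  rw [log_rpow (hp i hi)]
  ring

theorem mul_log_sum_rpow_le (hp : ∀ i ∈ s, 0 < p i) (hs : ∑ i ∈ s, p i = 1) (t : ℝ) {r : ℝ}
    (hr : 1 ≤ r) : r * log (∑ i ∈ s, p i ^ (1 + t)) ≤ log (∑ i ∈ s, p i ^ (1 + t * r)) := by
  have jensen := (convexOn_rpow hr).map_sum_le (p := fun i => p i ^ t)
    (fun i hi => (hp i hi).le) hs (fun i hi => (rpow_pos_of_pos (hp i hi) t).le)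
  simp only [smul_eq_mul] at jensen
  have hne : s.Nonempty := Finset.nonempty_of_sum_ne_zero (by rw [hs]; exact one_ne_zero)
  have hpos : 0 < ∑ i ∈ s, p i * p i ^ t :=
    Finset.sum_pos (fun i hi => mul_pos (hp i hi) (rpow_pos_of_pos (hp i hi) t)) hne
  rw [sum_rpow_one_add hp, sum_rpow_one_add hp, ← log_rpow hpos]
  refine log_le_log (rpow_pos_of_pos hpos r) (jensen.trans_eq ?_)
  exact Finset.sum_congr rfl fun i hi => by rw [← rpow_mul (hp i hi).le]

/-- A slope is compared with the value `∑ p log p` at `0` by Jensen's inequality for `log`, and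
two slopes on the same side of `0` by Jensen's inequality for `x ↦ x ^ r`, `r ≥ 1`. -/
theorem monotone_cumulantSlope (hp : ∀ i ∈ s, 0 < p i) (hs : ∑ i ∈ s, p i = 1) :
    Monotone (cumulantSlope s p) := by
  set K : ℝ → ℝ := fun t => log (∑ i ∈ s, p i ^ (1 + t))
  set E := ∑ i ∈ s, p i * log (p i)
  have above_of_pos : ∀ t, 0 < t → E ≤ K t / t := fun t ht =>
    (le_div_iff₀ ht).2 (by rw [mul_comm]; exact mul_sum_mul_log_le_log_sum_rpow hp hs t)
  have below_of_neg : ∀ t, t < 0 → K t / t ≤ E := fun t ht =>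
    (div_le_iff_of_neg ht).2 (by rw [mul_comm]; exact mul_sum_mul_log_le_log_sum_rpow hp hs t)
  have mono_of_pos : ∀ a b, 0 < a → a ≤ b → K a / a ≤ K b / b := by
    intro a b ha hab
    have hK := mul_log_sum_rpow_le hp hs a ((one_le_div ha).2 hab)
    rw [mul_div_cancel₀ b ha.ne'] at hK
    have hb : b ≠ 0 := (ha.trans_le hab).ne'
    calc K a / a = b / a * K a / b := by field_simp
      _ ≤ K b / b := div_le_div_of_nonneg_right hK (ha.le.trans hab)
  have mono_of_neg : ∀ a b, a ≤ b → b < 0 → K a / a ≤ K b / b := by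
    intro a b hab hb
    have hK := mul_log_sum_rpow_le hp hs b ((one_le_div_of_neg hb).2 hab)
    rw [mul_div_cancel₀ a hb.ne] at hK
    calc K a / a ≤ a / b * K b / a := div_le_div_of_nonpos_of_le (hab.trans hb.le) hK
      _ = K b / b := by have ha : a ≠ 0 := (hab.trans_lt hb).ne; field_simp
  intro a b hab
  simp only [cumulantSlope]
  split_ifs with ha hb hb
  · exact le_rfl
  · exact above_of_pos b (lt_of_le_of_ne (ha ▸ hab) (Ne.symm hb))
  · exact below_of_neg a (lt_of_le_of_ne (hb ▸ hab) ha)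
  · rcases lt_or_gt_of_ne ha with ha' | ha'
    · rcases lt_or_gt_of_ne hb with hb' | hb'
      · exact mono_of_neg a b hab hb'
      · exact (below_of_neg a ha').trans (above_of_pos b hb')
    · exact mono_of_pos a b ha' hab

theorem cumulantSlope_le_log (hp : ∀ i ∈ s, 0 < p i) (hs : ∑ i ∈ s, p i = 1) {M : ℝ}
    (hM : ∀ i ∈ s, p i ≤ M) (t : ℝ) : cumulantSlope s p t ≤ log M := by
  suffices h : ∀ t, 0 < t → cumulantSlope s p t ≤ log M by
    rcases lt_or_ge 0 t with ht | ht
    · exact h t ht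
    · exact (monotone_cumulantSlope hp hs (ht.trans zero_le_one)).trans (h 1 one_pos)
  intro t ht
  obtain ⟨j, hj⟩ := Finset.nonempty_of_sum_ne_zero (by rw [hs]; exact one_ne_zero)
  have hM0 : 0 < M := (hp j hj).trans_le (hM j hj)
  have hbound : ∑ i ∈ s, p i ^ (1 + t) ≤ M ^ t := calc
    ∑ i ∈ s, p i ^ (1 + t) ≤ ∑ i ∈ s, p i * M ^ t := Finset.sum_le_sum fun i hi => by
      rw [rpow_add (hp i hi), rpow_one]
      exact mul_le_mul_of_nonneg_left (rpow_le_rpow (hp i hi).le (hM i hi) ht.le) (hp i hi).le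
    _ = M ^ t := by rw [← Finset.sum_mul, hs, one_mul]
  have hpos : 0 < ∑ i ∈ s, p i ^ (1 + t) :=
    Finset.sum_pos (fun i hi => rpow_pos_of_pos (hp i hi) _) ⟨j, hj⟩
  rw [cumulantSlope, if_neg ht.ne', div_le_iff₀ ht, mul_comm, ← log_rpow hM0]
  exact log_le_log hpos hbound

end CumulantSlope

theorem renyiH_eq_neg_cumulantSlope (n : ℕ) (α : ℝ) (P : ℕ → ℝ) :
    renyiH n α P = -cumulantSlope (Finset.Icc 1 n) P (α - 1) := by
  rw [renyiH, cumulantSlope]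
  by_cases hα : α = 1
  · simp [hα]
  · rw [if_neg hα, if_neg (sub_ne_zero.2 hα), add_sub_cancel, div_eq_inv_mul, ← neg_mul,
      ← inv_neg, neg_sub]

theorem renyiH_antitone {n : ℕ} {P : ℕ → ℝ} (hP : IsPMF n P) :
    Antitone fun α => renyiH n α P := fun a b hab => by
  simp only [renyiH_eq_neg_cumulantSlope]
  exact neg_le_neg (monotone_cumulantSlope hP.1 hP.2 (sub_le_sub_right hab 1))

theorem IsPMF.one_le {n : ℕ} {P : ℕ → ℝ} (hP : IsPMF n P) : 1 ≤ n := by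
  by_contra h
  have hsum := hP.2
  rw [Finset.Icc_eq_empty (by omega), Finset.sum_empty] at hsum
  exact zero_ne_one hsum

theorem IsPMF.le_div_of_ratioBdd {n : ℕ} {ρ : ℝ} {P : ℕ → ℝ} (hP : IsPMF n P)
    (hR : RatioBdd n ρ P) : ∀ i ∈ Finset.Icc 1 n, P i ≤ ρ / n := by
  intro i hi
  have hn : (0 : ℝ) < n := by exact_mod_cast hP.one_le
  rw [le_div_iff₀ hn]
  calc P i * n = ∑ _j ∈ Finset.Icc 1 n, P i := by simp [mul_comm]
    _ ≤ ∑ j ∈ Finset.Icc 1 n, ρ * P j := Finset.sum_le_sum fun j hj => hR i hi j hj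
    _ = ρ := by rw [← Finset.mul_sum, hP.2, mul_one]

theorem log_sub_log_le_renyiH {n : ℕ} {ρ : ℝ} {P : ℕ → ℝ} (hP : IsPMF n P)
    (hR : RatioBdd n ρ P) (α : ℝ) : log n - log ρ ≤ renyiH n α P := by
  have hn : 1 ≤ n := hP.one_le
  have h1 : (1 : ℕ) ∈ Finset.Icc 1 n := Finset.mem_Icc.2 ⟨le_rfl, hn⟩
  have hρ : 0 < ρ := pos_of_mul_pos_left ((hP.1 1 h1).trans_le (hR 1 h1 1 h1)) (hP.1 1 h1).le
  have hslope := cumulantSlope_le_log hP.1 hP.2 (hP.le_div_of_ratioBdd hR) (α - 1)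
  rw [log_div hρ.ne' (by exact_mod_cast (Nat.one_le_iff_ne_zero.1 hn))] at hslope
  rw [renyiH_eq_neg_cumulantSlope]
  linarith

theorem isPMF_const_inv {n : ℕ} (hn : 1 ≤ n) : IsPMF n fun _ => (n : ℝ)⁻¹ := by
  have hn0 : (n : ℝ) ≠ 0 := by exact_mod_cast (Nat.one_le_iff_ne_zero.1 hn)
  refine ⟨fun _ _ => by positivity, ?_⟩
  simp [hn0]

theorem ratioBdd_const {n : ℕ} {ρ c : ℝ} (hρ : 1 ≤ ρ) (hc : 0 ≤ c) : RatioBdd n ρ fun _ => c :=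
  fun _ _ _ _ => le_mul_of_one_le_left hc hρ

theorem renyiH_const_inv {n : ℕ} (hn : 1 ≤ n) (α : ℝ) :
    renyiH n α (fun _ => (n : ℝ)⁻¹) = log n := by
  have hn0 : (0 : ℝ) < n := by exact_mod_cast hn
  rw [renyiH_eq_neg_cumulantSlope, cumulantSlope]
  split_ifs with hα
  · simp [log_inv, hn0.ne']
  · simp only [Finset.sum_const, Nat.card_Icc, Nat.add_sub_cancel, nsmul_eq_mul]
    rw [rpow_add (inv_pos.2 hn0), rpow_one, ← mul_assoc, mul_inv_cancel₀ hn0.ne', one_mul,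
      log_rpow (inv_pos.2 hn0), log_inv, mul_neg, neg_div, mul_div_cancel_left₀ _ hα, neg_neg]

theorem sum_Icc_two_mul_comp_div_two (f : ℕ → ℝ) (n : ℕ) :
    ∑ j ∈ Finset.Icc 1 (2 * n), f ((j + 1) / 2) = 2 * ∑ i ∈ Finset.Icc 1 n, f i := by
  induction n with
  | zero => simp
  | succ m ih =>
    rw [show 2 * (m + 1) = 2 * m + 1 + 1 by ring, Finset.sum_Icc_succ_top (by omega),
      Finset.sum_Icc_succ_top (by omega), ih, Finset.sum_Icc_succ_top (by omega : 1 ≤ m + 1),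
      show (2 * m + 1 + 1) / 2 = m + 1 by omega, show (2 * m + 1 + 1 + 1) / 2 = m + 1 by omega]
    ring

/-- Each mass `P i` is split into two masses `P i / 2`, at positions `2i - 1` and `2i`. -/
noncomputable def halveMasses (P : ℕ → ℝ) : ℕ → ℝ := fun j => P ((j + 1) / 2) / 2

theorem add_one_div_two_mem_Icc {n j : ℕ} (hj : j ∈ Finset.Icc 1 (2 * n)) :
    (j + 1) / 2 ∈ Finset.Icc 1 n := by
  rw [Finset.mem_Icc] at *
  omega

theorem IsPMF.halveMasses {n : ℕ} {P : ℕ → ℝ} (hP : IsPMF n P) :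
    IsPMF (2 * n) (halveMasses P) := by
  refine ⟨fun j hj => half_pos (hP.1 _ (add_one_div_two_mem_Icc hj)), ?_⟩
  simp only [_root_.halveMasses]
  rw [sum_Icc_two_mul_comp_div_two (fun i => P i / 2), ← Finset.sum_div, hP.2]
  norm_num

theorem RatioBdd.halveMasses {n : ℕ} {ρ : ℝ} {P : ℕ → ℝ} (hR : RatioBdd n ρ P) :
    RatioBdd (2 * n) ρ (halveMasses P) := fun i hi j hj => by
  rw [_root_.halveMasses, _root_.halveMasses, mul_div_assoc']
  exact div_le_div_of_nonneg_right
    (hR _ (add_one_div_two_mem_Icc hi) _ (add_one_div_two_mem_Icc hj))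
    zero_le_two

theorem cumulantSlope_halveMasses {n : ℕ} {P : ℕ → ℝ} (hP : IsPMF n P) (t : ℝ) :
    cumulantSlope (Finset.Icc 1 (2 * n)) (halveMasses P) t
      = cumulantSlope (Finset.Icc 1 n) P t - log 2 := by
  simp only [cumulantSlope, halveMasses]
  split_ifs with ht
  · rw [sum_Icc_two_mul_comp_div_two (fun i => P i / 2 * log (P i / 2)), Finset.mul_sum]
    have hsplit : ∀ i ∈ Finset.Icc 1 n,
        2 * (P i / 2 * log (P i / 2)) = P i * log (P i) - P i * log 2 := fun i hi => by
      rw [log_div (hP.1 i hi).ne' two_ne_zero]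
      ring
    rw [Finset.sum_congr rfl hsplit, Finset.sum_sub_distrib, ← Finset.sum_mul, hP.2, one_mul]
  · have hS : 0 < ∑ i ∈ Finset.Icc 1 n, P i ^ (1 + t) :=
      Finset.sum_pos (fun i hi => rpow_pos_of_pos (hP.1 i hi) _) (Finset.nonempty_Icc.2 hP.one_le)
    have hscale : ∑ j ∈ Finset.Icc 1 (2 * n), (P ((j + 1) / 2) / 2) ^ (1 + t)
        = (∑ i ∈ Finset.Icc 1 n, P i ^ (1 + t)) / 2 ^ t := by
      rw [sum_Icc_two_mul_comp_div_two (fun i => (P i / 2) ^ (1 + t)), Finset.sum_div,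
        Finset.mul_sum]
      refine Finset.sum_congr rfl fun i hi => ?_
      rw [div_rpow (hP.1 i hi).le zero_le_two, rpow_add two_pos, rpow_one]
      field_simp
    rw [hscale, log_div hS.ne' (rpow_pos_of_pos two_pos t).ne', log_rpow two_pos]
    field_simp

theorem renyiH_halveMasses {n : ℕ} {P : ℕ → ℝ} (hP : IsPMF n P) (α : ℝ) :
    renyiH (2 * n) α (halveMasses P) = renyiH n α P + log 2 := by
  rw [renyiH_eq_neg_cumulantSlope, renyiH_eq_neg_cumulantSlope, cumulantSlope_halveMasses hP]
  ring

noncomputable def minRenyiH (n : ℕ) (α ρ : ℝ) : ℝ :=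
  sInf (renyiH n α '' {P | IsPMF n P ∧ RatioBdd n ρ P})

theorem cN_of_one_lt {n : ℕ} (hn : 1 < n) (α ρ : ℝ) :
    cN α ρ n = log n - minRenyiH n α ρ := by
  rw [cN, if_neg (by omega), minRenyiH]

section MinRenyiH

variable {n : ℕ} {α ρ : ℝ}

theorem minRenyiH_le {P : ℕ → ℝ} (hP : IsPMF n P) (hR : RatioBdd n ρ P) :
    minRenyiH n α ρ ≤ renyiH n α P := by
  refine csInf_le ⟨log n - log ρ, ?_⟩ ⟨P, ⟨hP, hR⟩, rfl⟩
  rintro _ ⟨Q, ⟨hQ, hQR⟩, rfl⟩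
  exact log_sub_log_le_renyiH hQ hQR α

theorem le_minRenyiH (hn : 1 ≤ n) (hρ : 1 ≤ ρ) {b : ℝ}
    (h : ∀ P, IsPMF n P → RatioBdd n ρ P → b ≤ renyiH n α P) : b ≤ minRenyiH n α ρ := by
  refine le_csInf ⟨_, _, ⟨isPMF_const_inv hn, ratioBdd_const hρ (by positivity)⟩, rfl⟩ ?_
  rintro _ ⟨P, ⟨hP, hR⟩, rfl⟩
  exact h P hP hR

theorem minRenyiH_le_log (hn : 1 ≤ n) (hρ : 1 ≤ ρ) : minRenyiH n α ρ ≤ log n :=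
  (minRenyiH_le (isPMF_const_inv hn) (ratioBdd_const hρ (by positivity))).trans_eq
    (renyiH_const_inv hn α)

theorem log_sub_log_le_minRenyiH (hn : 1 ≤ n) (hρ : 1 ≤ ρ) :
    log n - log ρ ≤ minRenyiH n α ρ :=
  le_minRenyiH hn hρ fun _ hP hR => log_sub_log_le_renyiH hP hR α

theorem minRenyiH_two_mul_le (hn : 1 ≤ n) (hρ : 1 ≤ ρ) :
    minRenyiH (2 * n) α ρ ≤ minRenyiH n α ρ + log 2 := by
  rw [← sub_le_iff_le_add]
  refine le_minRenyiH hn hρ fun P hP hR => sub_le_iff_le_add.2 ?_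
  rw [← renyiH_halveMasses hP]
  exact minRenyiH_le hP.halveMasses hR.halveMasses

theorem minRenyiH_anti (hn : 1 ≤ n) (hρ : 1 ≤ ρ) {α₁ α₂ : ℝ} (h : α₁ ≤ α₂) :
    minRenyiH n α₂ ρ ≤ minRenyiH n α₁ ρ :=
  le_minRenyiH hn hρ fun _ hP hR => (minRenyiH_le hP hR).trans (renyiH_antitone hP h)

end MinRenyiH

section CN

variable {ρ : ℝ}

theorem cN_nonneg (hρ : 1 ≤ ρ) (α : ℝ) (n : ℕ) : 0 ≤ cN α ρ n := by
  rcases le_or_gt n 1 with hn | hn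
  · rw [cN, if_pos hn]
  · rw [cN_of_one_lt hn]
    linarith [minRenyiH_le_log (α := α) hn.le hρ]

theorem cN_le_log (hρ : 1 ≤ ρ) (α : ℝ) (n : ℕ) : cN α ρ n ≤ log ρ := by
  rcases le_or_gt n 1 with hn | hn
  · rw [cN, if_pos hn]
    exact log_nonneg hρ
  · rw [cN_of_one_lt hn]
    linarith [log_sub_log_le_minRenyiH (α := α) hn.le hρ]

theorem cN_le_cN_two_mul (hρ : 1 ≤ ρ) (α : ℝ) (n : ℕ) : cN α ρ n ≤ cN α ρ (2 * n) := by
  rcases le_or_gt n 1 with hn | hn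
  · rw [cN, if_pos hn]
    exact cN_nonneg hρ α (2 * n)
  · rw [cN_of_one_lt hn, cN_of_one_lt (by omega), Nat.cast_mul, Nat.cast_two,
      log_mul two_ne_zero (by positivity)]
    linarith [minRenyiH_two_mul_le (α := α) hn.le hρ]

theorem cN_monotone (hρ : 1 ≤ ρ) (n : ℕ) : Monotone fun α => cN α ρ n := fun α₁ α₂ h => by
  rcases le_or_gt n 1 with hn | hn
  · simp only [cN, if_pos hn, le_refl]
  · simp only [cN_of_one_lt hn]
    linarith [minRenyiH_anti hn.le hρ h]

end CN

theorem stmt2_general (ρ : ℝ) (hρ : 1 < ρ) (n : ℕ) :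
    (∀ α : ℝ, 0 < α → 0 ≤ cN α ρ n ∧ cN α ρ n ≤ Real.log ρ) ∧
      (∀ α : ℝ, 0 < α → cN α ρ n ≤ cN α ρ (2 * n)) ∧
      (∀ α₁ α₂ : ℝ, 0 < α₁ → α₁ ≤ α₂ → cN α₁ ρ n ≤ cN α₂ ρ n) :=
  ⟨fun α _ => ⟨cN_nonneg hρ.le α n, cN_le_log hρ.le α n⟩,
    fun α _ => cN_le_cN_two_mul hρ.le α n,
    fun _ _ _ h => cN_monotone hρ.le n h⟩

theorem stmt2 (ρ : ℝ) (hρ : 1 < ρ) (n : ℕ) (hn : 1 ≤ n) :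
    (∀ α : ℝ, 0 < α → 0 ≤ cN α ρ n ∧ cN α ρ n ≤ Real.log ρ) ∧
      (∀ α : ℝ, 0 < α → cN α ρ n ≤ cN α ρ (2 * n)) ∧
      (∀ α₁ α₂ : ℝ, 0 < α₁ → α₁ ≤ α₂ → cN α₁ ρ n ≤ cN α₂ ρ n) :=
  stmt2_general ρ hρ n
end

section
/- For ρ > 1 and α ∈ (0,1)∪(1,∞), the limit c_α^{(∞)}(ρ) := lim_{n→∞} c_α^{(n)}(ρ) exists and admits the closed form c_α^{(∞)}(ρ) = (1/(α−1))·log(1 + (1 + α(ρ−1) − ρ^α)/((1−α)(ρ−1))) − (α/(α−1))·log(1 + (1 + α(ρ−1) − ρ^α)/((1−α)(ρ^α−1))). -/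
open Finset

/-
Every mass of `P ∈ 𝒫_n(ρ)` lies in `[m, ρ m]`, where `m = p_min`. The function `x ↦ x^α / (1 - α)`
is concave for every order `α ≠ 1`, so it lies above its chord on `[m, ρ m]`; summing the chord
inequalities bounds `H_α(P)` from below by the entropy of a pmf taking only the masses `m` and
`ρ m`, and such pmfs belong to `𝒫_n(ρ)`. When the mass `ρ m` sits on a fraction `t` of the points,
`log n - H_α = g(t) = (α - 1)⁻¹ log (1 + (ρ^α - 1) t) - α / (α - 1) log (1 + (ρ - 1) t)`, which
increases up to some `θ ∈ [0, 1]` and decreases afterwards; the two bounds on `θ` are Bernoulli's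
inequality at `ρ` and at `ρ⁻¹`. Hence `g(⌊θ n⌋ / n) ≤ c_α^{(n)}(ρ) ≤ g(θ)`, and `g(θ)` is the
closed form.
-/

open Real Filter Topology

variable {α ρ : ℝ}

lemma one_add_mul_sub_rpow_div_one_sub_nonneg {x : ℝ} (hα : 0 ≤ α) (hα1 : α ≠ 1) (hx : 0 ≤ x) :
    0 ≤ (1 + α * (x - 1) - x ^ α) / (1 - α) := by
  have hs : -1 ≤ x - 1 := by linarith
  rcases lt_or_gt_of_ne hα1 with h | h
  · have := rpow_one_add_le_one_add_mul_self hs hα h.le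
    rw [add_sub_cancel] at this
    exact div_nonneg (by linarith) (by linarith)
  · have := one_add_mul_self_le_rpow_one_add hs h.le
    rw [add_sub_cancel] at this
    exact div_nonneg_of_nonpos (by linarith) (by linarith)

lemma concaveOn_one_sub_inv_mul_rpow (hα : 0 ≤ α) (hα1 : α ≠ 1) :
    ConcaveOn ℝ (Set.Ici 0) fun x : ℝ => (1 - α)⁻¹ * x ^ α := by
  rcases lt_or_gt_of_ne hα1 with h | h
  · exact (Real.concaveOn_rpow hα h.le).smul (inv_nonneg.2 (by linarith))
  · refine ((convexOn_rpow h.le).smul (inv_nonneg.2 (by linarith : 0 ≤ α - 1))).neg.congr ?_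
    intro x _
    simp only [Pi.neg_apply, smul_eq_mul, ← neg_mul, neg_inv, neg_sub]

lemma mul_log_le_mul_log_of_mul_le_mul {c x y : ℝ} (hx : 0 < x) (hy : 0 < y)
    (h : c * x ≤ c * y) : c * log x ≤ c * log y := by
  rcases lt_trichotomy c 0 with hc | rfl | hc
  · rw [mul_le_mul_left_of_neg hc] at h ⊢
    exact log_le_log hy h
  · simp
  · exact mul_le_mul_of_nonneg_left (log_le_log hx (le_of_mul_le_mul_left h hc)) hc.le

noncomputable def twoLevelGap (α ρ t : ℝ) : ℝ :=
  (α - 1)⁻¹ * log (1 + (ρ ^ α - 1) * t) - α / (α - 1) * log (1 + (ρ - 1) * t)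

noncomputable def twoLevelArgmax (α ρ : ℝ) : ℝ :=
  (1 + α * (ρ - 1) - ρ ^ α) / ((1 - α) * ((ρ ^ α - 1) * (ρ - 1)))

lemma twoLevelArgmax_nonneg (hρ : 1 < ρ) (hα : 0 < α) (hα1 : α ≠ 1) :
    0 ≤ twoLevelArgmax α ρ := by
  have ha : 0 < ρ ^ α - 1 := sub_pos.2 (one_lt_rpow hρ hα)
  have hb : 0 < ρ - 1 := sub_pos.2 hρ
  rw [twoLevelArgmax, ← div_div]
  exact div_nonneg (one_add_mul_sub_rpow_div_one_sub_nonneg hα.le hα1 (by linarith)) (by positivity)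

lemma twoLevelArgmax_le_one (hρ : 1 < ρ) (hα : 0 < α) (hα1 : α ≠ 1) :
    twoLevelArgmax α ρ ≤ 1 := by
  have hρ0 : 0 < ρ := by linarith
  have ha : 0 < ρ ^ α - 1 := sub_pos.2 (one_lt_rpow hρ hα)
  have hb : 0 < ρ - 1 := sub_pos.2 hρ
  have hα' : 1 - α ≠ 0 := sub_ne_zero.2 (Ne.symm hα1)
  -- `1 - θ` is a positive multiple of Bernoulli's defect at `ρ⁻¹`
  have key : 1 - twoLevelArgmax α ρ =
      ρ * ρ ^ α * ((1 + α * (ρ⁻¹ - 1) - ρ⁻¹ ^ α) / (1 - α)) / ((ρ ^ α - 1) * (ρ - 1)) := by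
    rw [twoLevelArgmax, inv_rpow hρ0.le]
    field_simp
    ring
  have := one_add_mul_sub_rpow_div_one_sub_nonneg hα.le hα1 (inv_nonneg.2 hρ0.le)
  have : 0 ≤ 1 - twoLevelArgmax α ρ := by rw [key]; positivity
  linarith

lemma hasDerivAt_twoLevelGap (hρ : 1 < ρ) (hα : 0 < α) (hα1 : α ≠ 1) {t : ℝ} (ht : 0 ≤ t) :
    HasDerivAt (twoLevelGap α ρ)
      ((ρ ^ α - 1) * (ρ - 1) * (twoLevelArgmax α ρ - t) /
        ((1 + (ρ ^ α - 1) * t) * (1 + (ρ - 1) * t))) t := by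
  have ha : 0 < ρ ^ α - 1 := sub_pos.2 (one_lt_rpow hρ hα)
  have hb : 0 < ρ - 1 := sub_pos.2 hρ
  have hα' : α - 1 ≠ 0 := sub_ne_zero.2 hα1
  have hα'' : 1 - α ≠ 0 := sub_ne_zero.2 (Ne.symm hα1)
  have h1 : 0 < 1 + (ρ ^ α - 1) * t := by positivity
  have h2 : 0 < 1 + (ρ - 1) * t := by positivity
  have l1 := (((hasDerivAt_id' t).const_mul (ρ ^ α - 1)).const_add 1).log h1.ne'
  have l2 := (((hasDerivAt_id' t).const_mul (ρ - 1)).const_add 1).log h2.ne'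
  refine ((l1.const_mul (α - 1)⁻¹).sub (l2.const_mul (α / (α - 1)))).congr_deriv ?_
  rw [twoLevelArgmax]
  field_simp
  ring

lemma twoLevelGap_le_twoLevelArgmax (hρ : 1 < ρ) (hα : 0 < α) (hα1 : α ≠ 1) {t : ℝ}
    (ht : 0 ≤ t) : twoLevelGap α ρ t ≤ twoLevelGap α ρ (twoLevelArgmax α ρ) := by
  set θ := twoLevelArgmax α ρ
  have hθ : 0 ≤ θ := twoLevelArgmax_nonneg hρ hα hα1
  have ha : 0 < ρ ^ α - 1 := sub_pos.2 (one_lt_rpow hρ hα)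
  have hb : 0 < ρ - 1 := sub_pos.2 hρ
  have hderiv : ∀ x, 0 ≤ x → HasDerivAt (twoLevelGap α ρ) _ x :=
    fun x hx => hasDerivAt_twoLevelGap hρ hα hα1 hx
  have hcont : ∀ s ⊆ Set.Ici 0, ContinuousOn (twoLevelGap α ρ) s :=
    fun s hs x hx => (hderiv x (hs hx)).continuousAt.continuousWithinAt
  rcases le_total t θ with htθ | hθt
  · refine monotoneOn_of_hasDerivWithinAt_nonneg (convex_Icc 0 θ)
      (hcont _ fun x hx => hx.1) (fun x hx => (hderiv x ?_).hasDerivWithinAt) (fun x hx => ?_)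
      ⟨ht, htθ⟩ ⟨hθ, le_rfl⟩ htθ
    all_goals rw [interior_Icc] at hx
    · exact hx.1.le
    · have : 0 ≤ θ - x := by linarith [hx.2]
      have := hx.1.le
      positivity
  · refine antitoneOn_of_hasDerivWithinAt_nonpos (convex_Ici θ)
      (hcont _ fun x hx => hθ.trans hx) (fun x hx => (hderiv x ?_).hasDerivWithinAt)
      (fun x hx => ?_) (Set.mem_Ici.2 le_rfl) hθt hθt
    all_goals rw [interior_Ici] at hx
    · exact hθ.trans hx.le
    · have hx0 : 0 ≤ x := hθ.trans hx.le
      have : θ - x ≤ 0 := by linarith [show θ < x from hx]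
      apply div_nonpos_of_nonpos_of_nonneg
      · exact mul_nonpos_of_nonneg_of_nonpos (by positivity) this
      · positivity

lemma cInfinity_eq_twoLevelGap_twoLevelArgmax (hρ : 1 < ρ) (hα : 0 < α) (hα1 : α ≠ 1) :
    cInfinity α ρ = twoLevelGap α ρ (twoLevelArgmax α ρ) := by
  have ha : ρ ^ α - 1 ≠ 0 := (sub_pos.2 (one_lt_rpow hρ hα)).ne'
  have hb : ρ - 1 ≠ 0 := (sub_pos.2 hρ).ne'
  have hα'' : 1 - α ≠ 0 := sub_ne_zero.2 (Ne.symm hα1)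
  rw [cInfinity, twoLevelGap, twoLevelArgmax]
  congr 4 <;> field_simp

lemma one_sub_inv_mul_log_eq_log_sub_twoLevelGap (hρ : 1 ≤ ρ) (hα : 0 ≤ α) (hα1 : α ≠ 1)
    {n T : ℝ} (hn : 0 < n) (hT : 0 ≤ T) :
    (1 - α)⁻¹ * log ((n + (ρ - 1) * T)⁻¹ ^ α * (n + (ρ ^ α - 1) * T)) =
      log n - twoLevelGap α ρ (T / n) := by
  have ha : 0 ≤ ρ ^ α - 1 := sub_nonneg.2 (one_le_rpow hρ hα)
  have hb : 0 ≤ ρ - 1 := sub_nonneg.2 hρ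
  have hA : 0 < n + (ρ ^ α - 1) * T := by positivity
  have hB : 0 < n + (ρ - 1) * T := by positivity
  have hα' : α - 1 ≠ 0 := sub_ne_zero.2 hα1
  have hα'' : 1 - α ≠ 0 := sub_ne_zero.2 (Ne.symm hα1)
  have e (c : ℝ) : 1 + c * (T / n) = (n + c * T) / n := by field_simp
  rw [twoLevelGap, e, e, log_mul (by positivity) hA.ne', log_rpow (inv_pos.2 hB), log_inv,
    log_div hA.ne' hn.ne', log_div hB.ne' hn.ne']
  field_simp
  ring

lemma one_sub_inv_mul_chord_le_rpow (hα : 0 ≤ α) (hα1 : α ≠ 1) (hρ : 1 < ρ) {m x : ℝ}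
    (hm : 0 < m) (hmx : m ≤ x) (hxρ : x ≤ ρ * m) :
    (1 - α)⁻¹ * (m ^ α * (1 + (ρ ^ α - 1) * ((x - m) / ((ρ - 1) * m)))) ≤ (1 - α)⁻¹ * x ^ α := by
  have hbm : 0 < (ρ - 1) * m := mul_pos (sub_pos.2 hρ) hm
  set t := (x - m) / ((ρ - 1) * m)
  have ht0 : 0 ≤ t := div_nonneg (sub_nonneg.2 hmx) hbm.le
  have ht1 : t ≤ 1 := (div_le_one hbm).2 (by linarith)
  have hx : (1 - t) * m + t * (ρ * m) = x := by
    have : ρ - 1 ≠ 0 := (sub_pos.2 hρ).ne'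
    simp only [t]
    field_simp
    ring
  have h := (concaveOn_one_sub_inv_mul_rpow hα hα1).2 (Set.mem_Ici.2 hm.le)
    (Set.mem_Ici.2 (by positivity : 0 ≤ ρ * m)) (sub_nonneg.2 ht1) ht0 (sub_add_cancel 1 t)
  simp only [smul_eq_mul] at h
  rw [hx, mul_rpow (by linarith) hm.le] at h
  exact le_of_eq_of_le (by ring) h

lemma exists_log_sub_twoLevelGap_le_renyiH (hρ : 1 < ρ) (hα : 0 ≤ α) (hα1 : α ≠ 1) {n : ℕ}
    (hn : 1 ≤ n) {P : ℕ → ℝ} (hP : IsPMF n P) (hR : RatioBdd n ρ P) :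
    ∃ T, 0 ≤ T ∧ log n - twoLevelGap α ρ (T / n) ≤ renyiH n α P := by
  obtain ⟨hpos, hsum⟩ := hP
  have hn0 : (0 : ℝ) < n := by exact_mod_cast hn
  obtain ⟨k, hk, hmin⟩ := Finset.exists_min_image (Icc 1 n) P ⟨1, Finset.mem_Icc.2 ⟨le_rfl, hn⟩⟩
  set m := P k
  have hm : 0 < m := hpos k hk
  have hbm : 0 < (ρ - 1) * m := mul_pos (sub_pos.2 hρ) hm
  set t := fun i => (P i - m) / ((ρ - 1) * m)
  set T := ∑ i ∈ Icc 1 n, t i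
  have hT : 0 ≤ T := Finset.sum_nonneg fun i hi => div_nonneg (sub_nonneg.2 (hmin i hi)) hbm.le
  have hm_eq : m = (n + (ρ - 1) * T)⁻¹ := by
    have hP_eq (i : ℕ) : P i = m + (ρ - 1) * m * t i := by
      rw [mul_div_cancel₀ _ hbm.ne']
      ring
    refine eq_inv_of_mul_eq_one_left ?_
    calc m * (n + (ρ - 1) * T) = ∑ i ∈ Icc 1 n, P i := by
          simp only [hP_eq, Finset.sum_add_distrib, ← Finset.mul_sum, Finset.sum_const,
            Nat.card_Icc, Nat.add_sub_cancel, nsmul_eq_mul, T]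
          ring
      _ = 1 := hsum
  have hchord : (1 - α)⁻¹ * (m ^ α * (n + (ρ ^ α - 1) * T)) ≤
      (1 - α)⁻¹ * ∑ i ∈ Icc 1 n, P i ^ α := by
    have e : m ^ α * (n + (ρ ^ α - 1) * T) = ∑ i ∈ Icc 1 n, m ^ α * (1 + (ρ ^ α - 1) * t i) := by
      simp only [← Finset.mul_sum, Finset.sum_add_distrib, Finset.sum_const, Nat.card_Icc,
        Nat.add_sub_cancel, nsmul_eq_mul, mul_one, T]
    rw [e, Finset.mul_sum, Finset.mul_sum]
    exact Finset.sum_le_sum fun i hi =>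
      one_sub_inv_mul_chord_le_rpow hα hα1 hρ hm (hmin i hi) (by simpa using hR i hi k hk)
  refine ⟨T, hT, ?_⟩
  rw [← one_sub_inv_mul_log_eq_log_sub_twoLevelGap hρ.le hα hα1 hn0 hT, ← hm_eq, renyiH,
    if_neg hα1]
  have ha : 0 ≤ ρ ^ α - 1 := sub_nonneg.2 (one_le_rpow hρ.le hα)
  exact mul_log_le_mul_log_of_mul_le_mul (by positivity)
    (Finset.sum_pos (fun i hi => rpow_pos_of_pos (hpos i hi) α) ⟨k, hk⟩) hchord

lemma sum_Icc_ite_le {n i : ℕ} (hin : i ≤ n) (c d : ℝ) :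
    ∑ j ∈ Icc 1 n, (if j ≤ i then c else d) = i * c + (n - i) * d := by
  have h₁ : (Icc 1 n).filter (· ≤ i) = Icc 1 i := by ext j; simp only [mem_filter, mem_Icc]; omega
  have h₂ : (Icc 1 n).filter (¬· ≤ i) = Icc (i + 1) n := by
    ext j; simp only [mem_filter, mem_Icc]; omega
  rw [sum_ite, h₁, h₂, sum_const, sum_const, Nat.card_Icc, Nat.card_Icc, Nat.add_sub_cancel,
    Nat.add_sub_add_right, nsmul_eq_mul, nsmul_eq_mul, Nat.cast_sub hin]

lemma exists_renyiH_eq_log_sub_twoLevelGap (hρ : 1 ≤ ρ) (hα : 0 ≤ α) (hα1 : α ≠ 1) {n i : ℕ}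
    (hn : 1 ≤ n) (hin : i ≤ n) :
    ∃ Q, IsPMF n Q ∧ RatioBdd n ρ Q ∧ renyiH n α Q = log n - twoLevelGap α ρ (i / n) := by
  have hn0 : (0 : ℝ) < n := by exact_mod_cast hn
  have hb : 0 ≤ ρ - 1 := sub_nonneg.2 hρ
  have hB : 0 < n + (ρ - 1) * i := by positivity
  set β := (n + (ρ - 1) * i)⁻¹
  have hβ : 0 < β := inv_pos.2 hB
  refine ⟨fun j => if j ≤ i then ρ * β else β, ⟨fun j _ => by positivity, ?_⟩, ?_, ?_⟩
  · rw [sum_Icc_ite_le hin, ← mul_inv_cancel₀ hB.ne']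
    ring
  · have hβρ : β ≤ ρ * β := le_mul_of_one_le_left hβ.le hρ
    intro j _ k _
    dsimp only
    split_ifs <;> nlinarith
  · rw [renyiH, if_neg hα1, ← one_sub_inv_mul_log_eq_log_sub_twoLevelGap hρ hα hα1 hn0
      (Nat.cast_nonneg i)]
    simp only [apply_ite (· ^ α), sum_Icc_ite_le hin, mul_rpow (by linarith : 0 ≤ ρ) hβ.le]
    congr 2
    ring

lemma log_sub_twoLevelGap_twoLevelArgmax_le_renyiH (hρ : 1 < ρ) (hα : 0 < α) (hα1 : α ≠ 1)
    {n : ℕ} (hn : 1 ≤ n) :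
    ∀ H ∈ renyiH n α '' {P | IsPMF n P ∧ RatioBdd n ρ P},
      log n - twoLevelGap α ρ (twoLevelArgmax α ρ) ≤ H := by
  rintro _ ⟨P, ⟨hP, hR⟩, rfl⟩
  obtain ⟨T, hT, hle⟩ := exists_log_sub_twoLevelGap_le_renyiH hρ hα.le hα1 hn hP hR
  have := twoLevelGap_le_twoLevelArgmax hρ hα hα1 (div_nonneg hT (Nat.cast_nonneg n))
  linarith

lemma cN_le_twoLevelGap_twoLevelArgmax (hρ : 1 < ρ) (hα : 0 < α) (hα1 : α ≠ 1) {n : ℕ}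
    (hn : 2 ≤ n) : cN α ρ n ≤ twoLevelGap α ρ (twoLevelArgmax α ρ) := by
  obtain ⟨Q, hQ, hRQ, -⟩ :=
    exists_renyiH_eq_log_sub_twoLevelGap hρ.le hα.le hα1 (by omega) (Nat.zero_le n)
  have := le_csInf (Set.Nonempty.image (renyiH n α)
    (⟨Q, hQ, hRQ⟩ : {P | IsPMF n P ∧ RatioBdd n ρ P}.Nonempty))
    (log_sub_twoLevelGap_twoLevelArgmax_le_renyiH hρ hα hα1 (by omega : 1 ≤ n))
  rw [cN, if_neg (by omega)]
  linarith

lemma twoLevelGap_le_cN (hρ : 1 < ρ) (hα : 0 < α) (hα1 : α ≠ 1) {n i : ℕ} (hn : 2 ≤ n)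
    (hin : i ≤ n) : twoLevelGap α ρ (i / n) ≤ cN α ρ n := by
  obtain ⟨Q, hQ, hRQ, hQH⟩ := exists_renyiH_eq_log_sub_twoLevelGap hρ.le hα.le hα1 (by omega) hin
  have := csInf_le ⟨_, log_sub_twoLevelGap_twoLevelArgmax_le_renyiH hρ hα hα1 (by omega)⟩
    ⟨Q, ⟨hQ, hRQ⟩, rfl⟩
  rw [cN, if_neg (by omega)]
  linarith

theorem stmt3 (ρ α : ℝ) (hρ : 1 < ρ) (hα : 0 < α) (hα1 : α ≠ 1) :
    Filter.Tendsto (fun n : ℕ => cN α ρ n) Filter.atTop (nhds (cInfinity α ρ)) := by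
  set θ := twoLevelArgmax α ρ
  have hθ0 : 0 ≤ θ := twoLevelArgmax_nonneg hρ hα hα1
  have hθ1 : θ ≤ 1 := twoLevelArgmax_le_one hρ hα hα1
  have hfloor : Tendsto (fun n : ℕ => (⌊θ * n⌋₊ : ℝ) / n) atTop (𝓝 θ) :=
    (tendsto_nat_floor_mul_div_atTop hθ0).comp tendsto_natCast_atTop_atTop
  have hlower : Tendsto (fun n : ℕ => twoLevelGap α ρ (⌊θ * n⌋₊ / n)) atTop
      (𝓝 (twoLevelGap α ρ θ)) :=
    (hasDerivAt_twoLevelGap hρ hα hα1 hθ0).continuousAt.tendsto.comp hfloor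
  rw [cInfinity_eq_twoLevelGap_twoLevelArgmax hρ hα hα1]
  refine tendsto_of_tendsto_of_tendsto_of_le_of_le' hlower tendsto_const_nhds ?_ ?_
  all_goals filter_upwards [eventually_ge_atTop 2] with n hn
  · refine twoLevelGap_le_cN hρ hα hα1 hn (Nat.floor_le_of_le ?_)
    exact mul_le_of_le_one_left (Nat.cast_nonneg n) hθ1
  · exact cN_le_twoLevelGap_twoLevelArgmax hρ hα hα1 hn
end

section
/- For every ρ > 1, the limit of c_α^{(∞)}(ρ) as α → ∞ equals log ρ, where c_α^{(∞)}(ρ) := (1/(α−1))·log(1 + (1 + α(ρ−1) − ρ^α)/((1−α)(ρ−1))) − (α/(α−1))·log(1 + (1 + α(ρ−1) − ρ^α)/((1−α)(ρ^α−1))) for α ∈ (0,1)∪(1,∞). -/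
open Finset

/-!
For `α > 1` the first logarithm in `c_α^{(∞)}(ρ)` is the log of `ρ^α (1 - ρ/ρ^α) / ((α-1)(ρ-1))`,
that is `α log ρ + O(log α)`, so after division by `α - 1` it tends to `log ρ`. The argument of the
second logarithm is `(α/(α-1)) · (ρ^α - ρ)/(ρ^α - 1)`, which tends to `1` because `ρ^α → ∞`.
-/

open Real Filter Topology

lemma tendsto_sub_div_sub_atTop (a b : ℝ) :
    Tendsto (fun x : ℝ => (x - a) / (x - b)) atTop (𝓝 1) := by
  have hshift : Tendsto (fun x : ℝ => x - b) atTop atTop :=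
    tendsto_atTop_add_const_right _ _ tendsto_id
  have h : Tendsto (fun x : ℝ => 1 + (b - a) / (x - b)) atTop (𝓝 1) := by
    simpa using tendsto_const_nhds.add (tendsto_const_nhds.div_atTop hshift)
  refine h.congr' ?_
  filter_upwards [hshift.eventually_gt_atTop 0] with x hx
  field_simp
  ring

lemma tendsto_div_sub_one_atTop : Tendsto (fun α : ℝ => α / (α - 1)) atTop (𝓝 1) := by
  simpa using tendsto_sub_div_sub_atTop 0 1

lemma tendsto_log_sub_one_div_sub_one_atTop :
    Tendsto (fun α : ℝ => log (α - 1) / (α - 1)) atTop (𝓝 0) := by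
  refine ((tendsto_pow_log_div_mul_add_atTop 1 0 1 one_ne_zero).comp
    (tendsto_atTop_add_const_right _ (-1 : ℝ) tendsto_id)).congr fun α => ?_
  simp [sub_eq_add_neg]

lemma cInfinity_eq_of_one_lt {α ρ : ℝ} (hρ : 1 < ρ) (hα : 1 < α) :
    cInfinity α ρ = α / (α - 1) * log ρ + (α - 1)⁻¹ * (log (1 - ρ / ρ ^ α) - log (ρ - 1))
      - log (α - 1) / (α - 1) - α / (α - 1) * log (α / (α - 1) * ((ρ ^ α - ρ) / (ρ ^ α - 1))) := by
  have hρα : ρ < ρ ^ α := by simpa using Real.rpow_lt_rpow_of_exponent_lt hρ hα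
  have hρα_pos : 0 < ρ ^ α := by positivity
  have hgap : 0 < 1 - ρ / ρ ^ α := by rw [sub_pos, div_lt_one hρα_pos]; exact hρα
  have hα1 : α - 1 ≠ 0 := by linarith
  have hρ1 : ρ - 1 ≠ 0 := by linarith
  have hρα1 : ρ ^ α - 1 ≠ 0 := by linarith
  have h1α : 1 - α ≠ 0 := by linarith
  have hfirst : 1 + (1 + α * (ρ - 1) - ρ ^ α) / ((1 - α) * (ρ - 1))
      = ρ ^ α * (1 - ρ / ρ ^ α) / ((α - 1) * (ρ - 1)) := by
    field_simp
    ring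
  have hsecond : 1 + (1 + α * (ρ - 1) - ρ ^ α) / ((1 - α) * (ρ ^ α - 1))
      = α / (α - 1) * ((ρ ^ α - ρ) / (ρ ^ α - 1)) := by
    field_simp
    ring
  rw [cInfinity, hfirst, hsecond, log_div (by positivity) (mul_ne_zero hα1 hρ1),
    log_mul hρα_pos.ne' hgap.ne', log_mul hα1 hρ1, log_rpow (by linarith)]
  field_simp
  ring

open Real Filter in
theorem stmt4 (ρ : ℝ) (hρ : 1 < ρ) :
    Filter.Tendsto (fun α : ℝ => cInfinity α ρ) Filter.atTop (nhds (Real.log ρ)) := by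
  have hpow : Tendsto (fun α : ℝ => ρ ^ α) atTop atTop := tendsto_rpow_atTop_of_base_gt_one ρ hρ
  have hinv : Tendsto (fun α : ℝ => (α - 1)⁻¹) atTop (𝓝 0) :=
    tendsto_inv_atTop_zero.comp (tendsto_atTop_add_const_right _ _ tendsto_id)
  have hgap : Tendsto (fun α : ℝ => log (1 - ρ / ρ ^ α)) atTop (𝓝 0) := by
    simpa using (tendsto_const_nhds.sub (tendsto_const_nhds.div_atTop hpow)).log
      (by norm_num : (1 : ℝ) - 0 ≠ 0)
  have hsecond : Tendsto (fun α : ℝ => log (α / (α - 1) * ((ρ ^ α - ρ) / (ρ ^ α - 1))))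
      atTop (𝓝 0) := by
    simpa using (tendsto_div_sub_one_atTop.mul
      ((tendsto_sub_div_sub_atTop ρ 1).comp hpow)).log (by norm_num)
  have hlim := (((tendsto_div_sub_one_atTop.mul_const (log ρ)).add
    (hinv.mul (hgap.sub_const (log (ρ - 1))))).sub tendsto_log_sub_one_div_sub_one_atTop).sub
    (tendsto_div_sub_one_atTop.mul hsecond)
  simp only [one_mul, zero_mul, add_zero, sub_zero, mul_zero] at hlim
  refine hlim.congr' ?_
  filter_upwards [eventually_gt_atTop 1] with α hα
  exact (cInfinity_eq_of_one_lt hρ hα).symm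
end

section
/- For every ρ > 1, the limit as α → 1 of c_α^{(∞)}(ρ) := (1/(α−1))·log(1 + (1 + α(ρ−1) − ρ^α)/((1−α)(ρ−1))) − (α/(α−1))·log(1 + (1 + α(ρ−1) − ρ^α)/((1−α)(ρ^α−1))) exists and equals (ρ·log ρ)/(ρ−1) − log(e·ρ·log ρ/(ρ−1)). -/
/-!
Write `s(α)` for the slope of `α ↦ ρ ^ α` between `1` and `α`. Both logarithm arguments of
`c_α^{(∞)}(ρ)` simplify, to `s(α) / (ρ - 1)` and `α s(α) / (ρ ^ α - 1)`, which turns the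
expression into `(α - 1)⁻¹ G(α) - log (α s(α) / (ρ ^ α - 1))` with
`G(α) = log ((ρ ^ α - 1) / (α (ρ - 1)))`. Since `G(1) = 0`, the first term tends to
`G'(1) = L - 1` where `L = ρ log ρ / (ρ - 1)`, and the second to `log L`, because `s(α)` tends to
`ρ log ρ`. Finally `L - 1 - log L = L - log (e L)`.
-/

open Finset

open Filter Topology Real

section

variable {ρ : ℝ}

lemma cInfinity_eq (hρ : 0 < ρ) (hρ1 : ρ ≠ 1) {α : ℝ} (hα0 : α ≠ 0) (hα1 : α ≠ 1) :
    cInfinity α ρ = (α - 1)⁻¹ * log ((ρ ^ α - 1) / (α * (ρ - 1)))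
      - log (α * slope (fun β : ℝ => ρ ^ β) 1 α / (ρ ^ α - 1)) := by
  have hα1' : α - 1 ≠ 0 := sub_ne_zero.mpr hα1
  have hρ1' : ρ - 1 ≠ 0 := sub_ne_zero.mpr hρ1
  have hρα1 : ρ ^ α - 1 ≠ 0 := by
    rw [sub_ne_zero, ← rpow_zero ρ, Ne, rpow_right_inj hρ hρ1]
    exact hα0
  have hραρ : ρ ^ α - ρ ≠ 0 := by
    rw [sub_ne_zero]
    nth_rewrite 2 [← rpow_one ρ]
    rw [Ne, rpow_right_inj hρ hρ1]
    exact hα1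
  have h1α : 1 - α ≠ 0 := fun h => hα1' (by linarith)
  have hs : slope (fun β : ℝ => ρ ^ β) 1 α = (ρ ^ α - ρ) / (α - 1) := by
    rw [slope_def_field, rpow_one]
  set s := slope (fun β : ℝ => ρ ^ β) 1 α
  have hs0 : s ≠ 0 := by rw [hs]; exact div_ne_zero hραρ hα1'
  have first_arg : 1 + (1 + α * (ρ - 1) - ρ ^ α) / ((1 - α) * (ρ - 1)) = s / (ρ - 1) := by
    rw [hs]
    field_simp
    ring
  have second_arg :
      1 + (1 + α * (ρ - 1) - ρ ^ α) / ((1 - α) * (ρ ^ α - 1)) = α * s / (ρ ^ α - 1) := by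
    rw [hs]
    field_simp
    ring
  rw [cInfinity, first_arg, second_arg, log_div hs0 hρ1', log_div (mul_ne_zero hα0 hs0) hρα1,
    log_mul hα0 hs0, log_div hρα1 (mul_ne_zero hα0 hρ1'), log_mul hα0 hρ1']
  field_simp
  ring

lemma tendsto_inv_sub_one_mul_log_rpow_sub_one_div (hρ : 0 < ρ) (hρ1 : ρ ≠ 1) :
    Tendsto (fun α : ℝ => (α - 1)⁻¹ * log ((ρ ^ α - 1) / (α * (ρ - 1)))) (𝓝[≠] 1)
      (𝓝 (ρ * log ρ / (ρ - 1) - 1)) := by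
  have hρ1' : ρ - 1 ≠ 0 := sub_ne_zero.mpr hρ1
  have ratio_at_one : (ρ ^ (1 : ℝ) - 1) / ((1 : ℝ) * (ρ - 1)) = 1 := by
    rw [rpow_one, one_mul, div_self hρ1']
  have hnum : HasDerivAt (fun α : ℝ => ρ ^ α - 1) (ρ * log ρ) 1 := by
    simpa using ((hasStrictDerivAt_const_rpow hρ 1).hasDerivAt).sub_const 1
  have hden : HasDerivAt (fun α : ℝ => α * (ρ - 1)) (ρ - 1) 1 := by
    simpa using (hasDerivAt_id (1 : ℝ)).mul_const (ρ - 1)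
  have hG : HasDerivAt (fun α : ℝ => log ((ρ ^ α - 1) / (α * (ρ - 1))))
      (ρ * log ρ / (ρ - 1) - 1) 1 := by
    refine (HasDerivAt.log (f := fun α : ℝ => (ρ ^ α - 1) / (α * (ρ - 1)))
      (hnum.div hden (by simpa using hρ1')) (by rw [ratio_at_one]; exact one_ne_zero)).congr_deriv
      ?_
    rw [ratio_at_one, rpow_one]
    field_simp
  refine hG.tendsto_slope.congr fun α => ?_
  rw [slope_def_field, ratio_at_one, log_one, sub_zero, div_eq_inv_mul]

lemma tendsto_mul_slope_rpow_div_rpow_sub_one (hρ : 0 < ρ) (hρ1 : ρ ≠ 1) :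
    Tendsto (fun α : ℝ => α * slope (fun β : ℝ => ρ ^ β) 1 α / (ρ ^ α - 1)) (𝓝[≠] 1)
      (𝓝 (ρ * log ρ / (ρ - 1))) := by
  have hderiv := (hasStrictDerivAt_const_rpow hρ 1).hasDerivAt
  rw [rpow_one] at hderiv
  have hpow : Tendsto (fun α : ℝ => ρ ^ α - 1) (𝓝[≠] 1) (𝓝 (ρ - 1)) := by
    have := hderiv.continuousAt.tendsto.mono_left (nhdsWithin_le_nhds (s := {1}ᶜ))
    rw [rpow_one] at this
    exact this.sub_const 1
  have := ((tendsto_nhdsWithin_of_tendsto_nhds tendsto_id).mul hderiv.tendsto_slope).div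
    hpow (sub_ne_zero.mpr hρ1)
  rw [one_mul] at this
  exact this

end

theorem stmt5 (ρ : ℝ) (hρ : 1 < ρ) :
    Filter.Tendsto (fun α : ℝ => cInfinity α ρ) (nhdsWithin 1 {α : ℝ | α ≠ 1})
      (nhds (ρ * Real.log ρ / (ρ - 1) -
        Real.log (Real.exp 1 * ρ * Real.log ρ / (ρ - 1)))) := by
  have hρ0 : 0 < ρ := one_pos.trans hρ
  have hL : 0 < ρ * log ρ / (ρ - 1) := div_pos (mul_pos hρ0 (log_pos hρ)) (sub_pos.mpr hρ)
  have limit_eq : ρ * log ρ / (ρ - 1) - log (exp 1 * ρ * log ρ / (ρ - 1))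
      = (ρ * log ρ / (ρ - 1) - 1) - log (ρ * log ρ / (ρ - 1)) := by
    rw [mul_assoc, mul_div_assoc (exp 1), log_mul (exp_ne_zero 1) hL.ne', log_exp]
    ring
  rw [limit_eq]
  refine ((tendsto_inv_sub_one_mul_log_rpow_sub_one_div hρ0 hρ.ne').sub
    ((tendsto_mul_slope_rpow_div_rpow_sub_one hρ0 hρ.ne').log hL.ne')).congr' ?_
  filter_upwards [eventually_nhdsWithin_of_eventually_nhds (eventually_ne_nhds one_ne_zero),
    self_mem_nhdsWithin] with α hα0 hα1
  exact (cInfinity_eq hρ0 hρ.ne' hα0 hα1).symm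
end

section
/- For every α ∈ (0,1)∪(1,∞), the limit of c_α^{(∞)}(ρ) as ρ ↓ 1 equals 0, where c_α^{(∞)}(ρ) := (1/(α−1))·log(1 + (1 + α(ρ−1) − ρ^α)/((1−α)(ρ−1))) − (α/(α−1))·log(1 + (1 + α(ρ−1) − ρ^α)/((1−α)(ρ^α−1))) for ρ > 1. -/
open Finset

/-! With `t = (ρ ^ α - 1) / (ρ - 1)`, the difference quotient of `x ↦ x ^ α` at `1`, both
logarithms in `cInfinity α ρ` become continuous functions of `t` vanishing at `t = α`, and
`t → α` as `ρ ↓ 1`. -/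

open Filter Topology

lemma tendsto_rpow_sub_one_div_sub_one (α : ℝ) :
    Tendsto (fun ρ : ℝ => (ρ ^ α - 1) / (ρ - 1)) (𝓝[≠] 1) (𝓝 α) := by
  have hderiv : HasDerivAt (fun x : ℝ => x ^ α) α 1 := by
    simpa using Real.hasDerivAt_rpow_const (x := 1) (p := α) (Or.inl one_ne_zero)
  simpa [slope_fun_def_field] using hasDerivAt_iff_tendsto_slope.mp hderiv

lemma Real.rpow_ne_one_of_one_lt {ρ α : ℝ} (hρ : 1 < ρ) (hα : α ≠ 0) : ρ ^ α ≠ 1 := by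
  rcases hα.lt_or_gt with hα | hα
  · exact (Real.rpow_lt_one_of_one_lt_of_neg hρ hα).ne
  · exact (Real.one_lt_rpow hρ hα).ne'

noncomputable def cInfinityOfSlope (α t : ℝ) : ℝ :=
  (α - 1)⁻¹ * Real.log (1 + (α - t) / (1 - α))
    - α / (α - 1) * Real.log (1 + (α - t) / ((1 - α) * t))

lemma cInfinity_eq_cInfinityOfSlope {α ρ : ℝ} (hα : α ≠ 0) (hα1 : α ≠ 1) (hρ : 1 < ρ) :
    cInfinity α ρ = cInfinityOfSlope α ((ρ ^ α - 1) / (ρ - 1)) := by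
  have hρ1 : ρ - 1 ≠ 0 := sub_ne_zero.mpr hρ.ne'
  have hρα : ρ ^ α - 1 ≠ 0 := sub_ne_zero.mpr (Real.rpow_ne_one_of_one_lt hρ hα)
  have hα1' : 1 - α ≠ 0 := sub_ne_zero.mpr hα1.symm
  unfold cInfinity cInfinityOfSlope
  congr 4 <;> field_simp <;> ring

lemma continuousAt_cInfinityOfSlope {α : ℝ} (hα : α ≠ 0) (hα1 : α ≠ 1) :
    ContinuousAt (cInfinityOfSlope α) α := by
  have hα1' : 1 - α ≠ 0 := sub_ne_zero.mpr hα1.symm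
  unfold cInfinityOfSlope
  fun_prop (disch := simp [hα, hα1'])

lemma cInfinityOfSlope_self (α : ℝ) : cInfinityOfSlope α α = 0 := by
  simp [cInfinityOfSlope]

theorem stmt6 (α : ℝ) (hα : 0 < α) (hα1 : α ≠ 1) :
    Filter.Tendsto (fun ρ : ℝ => cInfinity α ρ) (nhdsWithin 1 (Set.Ioi 1)) (nhds 0) := by
  have hslope : Tendsto (fun ρ : ℝ => (ρ ^ α - 1) / (ρ - 1)) (𝓝[>] 1) (𝓝 α) :=
    (tendsto_rpow_sub_one_div_sub_one α).mono_left
      (nhdsWithin_mono _ fun _ hρ => ne_of_gt hρ)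
  have hlim := (continuousAt_cInfinityOfSlope hα.ne' hα1).tendsto.comp hslope
  rw [cInfinityOfSlope_self] at hlim
  refine hlim.congr' ?_
  filter_upwards [self_mem_nhdsWithin] with ρ hρ
  exact (cInfinity_eq_cInfinityOfSlope hα.ne' hα1 hρ).symm
end

section
/- Let ρ > 1, n ≥ 2 an integer, and α ∈ (0,1)∪(1,∞). Then for every P ∈ P_n(ρ), H_α(P) ≥ log n − [(1/(α−1))·log(1 + (1 + α(ρ−1) − ρ^α)/((1−α)(ρ−1))) − (α/(α−1))·log(1 + (1 + α(ρ−1) − ρ^α)/((1−α)(ρ^α−1)))]. -/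
open Finset

/-!
Let `m` be the least mass, so that all masses lie in `[m, ρ m]`. On this interval `x ↦ x ^ α`
lies below its secant when `α > 1` and above it when `α < 1`; summing the secant bound over the
`n` masses, which add up to `1`, bounds `∑ P i ^ α` by an explicit function of `m` alone. The
tangent-line inequality for `t ↦ t ^ α` bounds that function by its extremum over `m > 0`, and
`(1 - α)⁻¹ log` of the extremal value is `log n - c_α^{(∞)}(ρ)`.

Every inequality is stated multiplied by `α - 1`, which treats `α < 1` and `α > 1` at once.
-/

open Real

lemma sub_one_mul_rpow_tangent_sub_one_nonpos {α t : ℝ} (hα : 0 < α) (ht : 0 < t) :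
    (α - 1) * (α * t ^ (α - 1) + (1 - α) * t ^ α - 1) ≤ 0 := by
  have hs : -1 ≤ t⁻¹ - 1 := by linarith [inv_pos.2 ht]
  have htα : 0 < t ^ α := rpow_pos_of_pos ht α
  have hpow : (1 + (t⁻¹ - 1)) ^ α * t ^ α = 1 := by
    rw [add_sub_cancel, inv_rpow ht.le, inv_mul_cancel₀ htα.ne']
  have hlin : (1 + α * (t⁻¹ - 1)) * t ^ α = α * t ^ (α - 1) + (1 - α) * t ^ α := by
    rw [rpow_sub_one ht.ne']; field_simp; ring
  -- Bernoulli's inequality at `1 + s = t⁻¹`, multiplied by `t ^ α`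
  rcases le_or_gt α 1 with h | h
  · have key := mul_le_mul_of_nonneg_right (rpow_one_add_le_one_add_mul_self hs hα.le h) htα.le
    rw [hpow, hlin] at key
    exact mul_nonpos_of_nonpos_of_nonneg (by linarith) (by linarith)
  · have key := mul_le_mul_of_nonneg_right (one_add_mul_self_le_rpow_one_add hs h.le) htα.le
    rw [hpow, hlin] at key
    exact mul_nonpos_of_nonneg_of_nonpos (by linarith) (by linarith)

lemma ConvexOn.sub_mul_le_secant {s : Set ℝ} {f : ℝ → ℝ} (hf : ConvexOn ℝ s f) {x y z : ℝ}
    (hx : x ∈ s) (hz : z ∈ s) (hxy : x ≤ y) (hyz : y ≤ z) :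
    (z - x) * f y ≤ (z - y) * f x + (y - x) * f z := by
  rcases hxy.eq_or_lt with rfl | hxy
  · linarith
  rcases hyz.eq_or_lt with rfl | hyz
  · linarith
  exact hf.secant_mono_aux1 hx hz hxy hyz

lemma sub_one_mul_rpow_sub_secant_nonpos {α x y z : ℝ} (hα : 0 < α) (hx : 0 ≤ x)
    (hxy : x ≤ y) (hyz : y ≤ z) :
    (α - 1) * ((z - x) * y ^ α - ((z - y) * x ^ α + (y - x) * z ^ α)) ≤ 0 := by
  have hz : z ∈ Set.Ici (0 : ℝ) := hx.trans (hxy.trans hyz)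
  rcases le_or_gt α 1 with h | h
  · have key := (concaveOn_rpow hα.le h).neg.sub_mul_le_secant hx hz hxy hyz
    simp only [Pi.neg_apply] at key
    exact mul_nonpos_of_nonpos_of_nonneg (by linarith) (by linarith)
  · have key := (convexOn_rpow h.le).sub_mul_le_secant hx hz hxy hyz
    exact mul_nonpos_of_nonneg_of_nonpos (by linarith) (by linarith)

lemma sub_one_mul_sum_rpow_sub_secant_nonpos {ι : Type*} {s : Finset ι} {P : ι → ℝ}
    {α ρ m : ℝ} (hα : 0 < α) (hm : 0 < m) (hsum : ∑ i ∈ s, P i = 1)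
    (hlow : ∀ i ∈ s, m ≤ P i) (hup : ∀ i ∈ s, P i ≤ ρ * m) :
    (α - 1) * ((ρ - 1) * ∑ i ∈ s, P i ^ α
      - ((ρ ^ α - 1) * m ^ (α - 1) - #s * (ρ ^ α - ρ) * m ^ α)) ≤ 0 := by
  obtain ⟨i₀, hi₀⟩ := Finset.nonempty_of_sum_ne_zero (hsum.trans_ne one_ne_zero)
  have hρ : 0 ≤ ρ :=
    nonneg_of_mul_nonneg_left (hm.le.trans ((hlow i₀ hi₀).trans (hup i₀ hi₀))) hm
  have hsecant : ∑ i ∈ s, (α - 1) * ((ρ * m - m) * P i ^ α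
      - ((ρ * m - P i) * m ^ α + (P i - m) * (ρ * m) ^ α)) ≤ 0 :=
    Finset.sum_nonpos fun i hi =>
      sub_one_mul_rpow_sub_secant_nonpos hα hm.le (hlow i hi) (hup i hi)
  have hexpand : ∑ i ∈ s, (α - 1) * ((ρ * m - m) * P i ^ α
      - ((ρ * m - P i) * m ^ α + (P i - m) * (ρ * m) ^ α))
      = m * ((α - 1) * ((ρ - 1) * ∑ i ∈ s, P i ^ α
      - ((ρ ^ α - 1) * m ^ (α - 1) - #s * (ρ ^ α - ρ) * m ^ α))) := by
    simp only [← Finset.mul_sum, Finset.sum_sub_distrib, Finset.sum_add_distrib,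
      ← Finset.sum_mul, Finset.sum_const, nsmul_eq_mul, hsum]
    rw [mul_rpow hρ hm.le, rpow_sub_one hm.ne']
    field_simp
    ring
  rw [hexpand] at hsecant
  exact nonpos_of_mul_nonpos_right hsecant hm

lemma sub_one_mul_sub_rpow_max_nonpos {α A D t : ℝ} (hα : 0 < α) (hA : 0 < A) (hD : 0 < D)
    (ht : 0 < t) :
    (α - 1) * (A * t ^ (α - 1) - (α - 1) * D * t ^ α - D ^ (1 - α) * (A / α) ^ α) ≤ 0 := by
  -- the extremum over `t` is attained at `t = A / (α D)`; rescale it to `1`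
  set K := α * D / A with hK
  have hK0 : 0 < K := by positivity
  have hK1 : K ^ (1 - α) * K ^ (α - 1) = 1 := by
    rw [← rpow_add hK0]; norm_num
  have hKα : K ^ (1 - α) * K ^ α = K := by
    rw [← rpow_add hK0]; norm_num
  have hAK : A / α * K = D := by rw [hK]; field_simp
  have hmax : A / α * K ^ (1 - α) = D ^ (1 - α) * (A / α) ^ α := by
    rw [hK, show α * D / A = D / (A / α) by field_simp, div_rpow hD.le (by positivity),
      rpow_sub (by positivity : 0 < A / α) 1 α, rpow_one]
    field_simp
  have hexpand : A / α * K ^ (1 - α) * (α * (K * t) ^ (α - 1) + (1 - α) * (K * t) ^ α - 1)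
      = A * t ^ (α - 1) - (α - 1) * D * t ^ α - D ^ (1 - α) * (A / α) ^ α := by
    rw [mul_rpow hK0.le ht.le, mul_rpow hK0.le ht.le, ← hmax]
    linear_combination (A / α * α * t ^ (α - 1)) * hK1 + (A / α * (1 - α) * t ^ α) * hKα
      + ((1 - α) * t ^ α) * hAK + t ^ (α - 1) * div_mul_cancel₀ A hα.ne'
  rw [← hexpand, mul_left_comm]
  exact mul_nonpos_of_nonneg_of_nonpos (by positivity)
    (sub_one_mul_rpow_tangent_sub_one_nonpos hα (mul_pos hK0 ht))

lemma rpow_sub_one_div_sub_one_pos {α ρ : ℝ} (hα : 0 < α) (hρ : 1 < ρ) :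
    0 < (ρ ^ α - 1) / (ρ - 1) :=
  div_pos (sub_pos.2 (one_lt_rpow hρ hα)) (sub_pos.2 hρ)

lemma rpow_sub_self_div_mul_sub_one_pos {α ρ : ℝ} (hα1 : α ≠ 1) (hρ : 1 < ρ) :
    0 < (ρ ^ α - ρ) / ((ρ - 1) * (α - 1)) := by
  rw [mul_comm, ← div_div]
  refine div_pos ?_ (sub_pos.2 hρ)
  nth_rewrite 2 [← rpow_one ρ]
  rcases lt_or_gt_of_ne hα1 with h | h
  · exact div_pos_of_neg_of_neg (sub_neg.2 ((rpow_lt_rpow_left_iff hρ).2 h)) (by linarith)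
  · exact div_pos (sub_pos.2 ((rpow_lt_rpow_left_iff hρ).2 h)) (by linarith)

/-- The extremum over `m > 0` of the secant bound
`((ρ ^ α - 1) * m ^ (α - 1) - n * (ρ ^ α - ρ) * m ^ α) / (ρ - 1)` on `∑ P i ^ α`: a maximum
for `α > 1`, a minimum for `α < 1`. -/
noncomputable def extremalPowerSum (α ρ n : ℝ) : ℝ :=
  (n * ((ρ ^ α - ρ) / ((ρ - 1) * (α - 1)))) ^ (1 - α) * ((ρ ^ α - 1) / (ρ - 1) / α) ^ α

lemma extremalPowerSum_pos {α ρ n : ℝ} (hα : 0 < α) (hα1 : α ≠ 1) (hρ : 1 < ρ) (hn : 0 < n) :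
    0 < extremalPowerSum α ρ n := by
  have hu := rpow_sub_self_div_mul_sub_one_pos hα1 hρ
  have hc := rpow_sub_one_div_sub_one_pos hα hρ
  unfold extremalPowerSum
  positivity

lemma sub_one_mul_sum_rpow_sub_extremalPowerSum_nonpos {ι : Type*} {s : Finset ι} {P : ι → ℝ}
    {α ρ : ℝ} (hα : 0 < α) (hα1 : α ≠ 1) (hρ : 1 < ρ) (hpos : ∀ i ∈ s, 0 < P i)
    (hsum : ∑ i ∈ s, P i = 1) (hratio : ∀ i ∈ s, ∀ j ∈ s, P i ≤ ρ * P j) :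
    (α - 1) * (∑ i ∈ s, P i ^ α - extremalPowerSum α ρ #s) ≤ 0 := by
  have hne : s.Nonempty := Finset.nonempty_of_sum_ne_zero (hsum.trans_ne one_ne_zero)
  obtain ⟨j, hj, hmin⟩ := s.exists_min_image P hne
  have hsecant := sub_one_mul_sum_rpow_sub_secant_nonpos hα (hpos j hj) hsum hmin
    fun i hi => hratio i hi j hj
  have hD : 0 < (#s : ℝ) * ((ρ ^ α - ρ) / ((ρ - 1) * (α - 1))) :=
    mul_pos (by exact_mod_cast hne.card_pos) (rpow_sub_self_div_mul_sub_one_pos hα1 hρ)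
  have hmax := sub_one_mul_sub_rpow_max_nonpos hα (rpow_sub_one_div_sub_one_pos hα hρ) hD
    (hpos j hj)
  set m := P j
  have hρ1 : ρ - 1 ≠ 0 := sub_ne_zero.2 hρ.ne'
  have hα1' : α - 1 ≠ 0 := sub_ne_zero.2 hα1
  have hsplit : (α - 1) * ((ρ - 1) * ∑ i ∈ s, P i ^ α
      - ((ρ ^ α - 1) * m ^ (α - 1) - #s * (ρ ^ α - ρ) * m ^ α))
      = (ρ - 1) * ((α - 1) * (∑ i ∈ s, P i ^ α - ((ρ ^ α - 1) / (ρ - 1) * m ^ (α - 1)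
        - (α - 1) * (#s * ((ρ ^ α - ρ) / ((ρ - 1) * (α - 1)))) * m ^ α))) := by
    field_simp
  rw [hsplit] at hsecant
  have hsecant' := nonpos_of_mul_nonpos_right hsecant (sub_pos.2 hρ)
  rw [extremalPowerSum]
  linarith

lemma log_sub_cInfinity_eq {α ρ n : ℝ} (hα : 0 < α) (hα1 : α ≠ 1) (hρ : 1 < ρ) (hn : 0 < n) :
    log n - cInfinity α ρ = (1 - α)⁻¹ * log (extremalPowerSum α ρ n) := by
  have hρ1 : ρ - 1 ≠ 0 := sub_ne_zero.2 hρ.ne'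
  have hα1' : α - 1 ≠ 0 := sub_ne_zero.2 hα1
  have h1α : 1 - α ≠ 0 := sub_ne_zero.2 hα1.symm
  have hρα : ρ ^ α - 1 ≠ 0 := (sub_pos.2 (one_lt_rpow hρ hα)).ne'
  set u := (ρ ^ α - ρ) / ((ρ - 1) * (α - 1)) with hu
  set c := (ρ ^ α - 1) / (ρ - 1) with hc
  have hu0 : 0 < u := rpow_sub_self_div_mul_sub_one_pos hα1 hρ
  have hc0 : 0 < c := rpow_sub_one_div_sub_one_pos hα hρ
  have hfirst : 1 + (1 + α * (ρ - 1) - ρ ^ α) / ((1 - α) * (ρ - 1)) = u := by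
    rw [hu]; field_simp; ring
  have hsecond : 1 + (1 + α * (ρ - 1) - ρ ^ α) / ((1 - α) * (ρ ^ α - 1)) = α * u / c := by
    rw [hu, hc]; field_simp; ring
  rw [cInfinity, hfirst, hsecond, extremalPowerSum,
    log_mul (by positivity) (by positivity), log_rpow (by positivity), log_rpow (by positivity),
    log_mul hn.ne' hu0.ne', log_div hc0.ne' hα.ne', log_div (by positivity) hc0.ne',
    log_mul hα.ne' hu0.ne']
  field_simp
  ring

lemma inv_one_sub_mul_log_le_of_sub_one_mul_sub_nonpos {α S B : ℝ} (hS : 0 < S) (hB : 0 < B)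
    (h : (α - 1) * (S - B) ≤ 0) :
    (1 - α)⁻¹ * log B ≤ (1 - α)⁻¹ * log S := by
  rcases lt_trichotomy α 1 with hα | rfl | hα
  · have hBS : B ≤ S := by nlinarith
    exact mul_le_mul_of_nonneg_left (log_le_log hB hBS) (inv_nonneg.2 (by linarith))
  · simp
  · have hSB : S ≤ B := by nlinarith
    exact mul_le_mul_of_nonpos_left (log_le_log hS hSB) (inv_nonpos.2 (by linarith))

theorem log_card_sub_cInfinity_le {ι : Type*} {s : Finset ι} {P : ι → ℝ} {α ρ : ℝ}
    (hα : 0 < α) (hα1 : α ≠ 1) (hρ : 1 < ρ) (hpos : ∀ i ∈ s, 0 < P i)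
    (hsum : ∑ i ∈ s, P i = 1) (hratio : ∀ i ∈ s, ∀ j ∈ s, P i ≤ ρ * P j) :
    log #s - cInfinity α ρ ≤ (1 - α)⁻¹ * log (∑ i ∈ s, P i ^ α) := by
  have hne : s.Nonempty := Finset.nonempty_of_sum_ne_zero (hsum.trans_ne one_ne_zero)
  have hcard : (0 : ℝ) < #s := by exact_mod_cast hne.card_pos
  rw [log_sub_cInfinity_eq hα hα1 hρ hcard]
  exact inv_one_sub_mul_log_le_of_sub_one_mul_sub_nonpos
    (Finset.sum_pos (fun i hi => rpow_pos_of_pos (hpos i hi) α) hne)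
    (extremalPowerSum_pos hα hα1 hρ hcard)
    (sub_one_mul_sum_rpow_sub_extremalPowerSum_nonpos hα hα1 hρ hpos hsum hratio)

theorem stmt8_general (n : ℕ) (ρ α : ℝ) (hρ : 1 < ρ) (hα : 0 < α) (hα1 : α ≠ 1)
    (P : ℕ → ℝ) (hP : IsPMF n P) (hPρ : RatioBdd n ρ P) :
    Real.log n - cInfinity α ρ ≤ renyiH n α P := by
  have h := log_card_sub_cInfinity_le hα hα1 hρ hP.1 hP.2 hPρ
  rw [Nat.card_Icc, Nat.add_sub_cancel] at h
  rwa [renyiH, if_neg hα1]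

theorem stmt8 (n : ℕ) (hn : 2 ≤ n) (ρ α : ℝ) (hρ : 1 < ρ) (hα : 0 < α) (hα1 : α ≠ 1)
    (P : ℕ → ℝ) (hP : IsPMF n P) (hPρ : RatioBdd n ρ P) :
    Real.log n - cInfinity α ρ ≤ renyiH n α P :=
  stmt8_general n ρ α hρ hα hα1 P hP hPρ
end

section
/- Let ρ > 1 and n ≥ 2 an integer. Then for every P ∈ P_n(ρ), the Shannon entropy satisfies H(P) ≥ log n − [(ρ·log ρ)/(ρ−1) − log(e·ρ·log ρ/(ρ−1))]. -/
open Finset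

theorem stmt9 (n : ℕ) (hn : 2 ≤ n) (ρ : ℝ) (hρ : 1 < ρ)
    (P : ℕ → ℝ) (hP : IsPMF n P) (hPρ : RatioBdd n ρ P) :
    Real.log n - (ρ * Real.log ρ / (ρ - 1) -
        Real.log (Real.exp 1 * ρ * Real.log ρ / (ρ - 1)))
      ≤ -∑ i ∈ Finset.Icc 1 n, P i * Real.log (P i) := by
  obtain ⟨hpos, hsum⟩ := hP
  have hn1 : 1 ≤ n := le_trans (by norm_num) hn
  have hne : (Finset.Icc 1 n).Nonempty := ⟨1, by simp [hn1]⟩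
  obtain ⟨j0, hj0, hj0min⟩ := Finset.exists_min_image _ P hne
  have hPj0 : 0 < P j0 := hpos _ hj0
  have hnpos : (0:ℝ) < (n:ℝ) := by exact_mod_cast lt_of_lt_of_le one_pos hn1
  set m : ℝ := (n:ℝ) * P j0 with hm
  have hmpos : 0 < m := mul_pos hnpos hPj0
  have hρ0 : 0 < ρ := lt_trans one_pos hρ
  have hlogρ : 0 < Real.log ρ := Real.log_pos hρ
  have hρ1 : 0 < ρ - 1 := by linarith
  set t : ℝ := ρ * Real.log ρ / (ρ - 1) with ht
  have htpos : 0 < t := by positivity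
  -- pointwise chord bound
  have key : ∀ i ∈ Finset.Icc 1 n,
      ((n:ℝ) * P i) * Real.log ((n:ℝ) * P i)
        ≤ (Real.log m + t) * ((n:ℝ) * P i) - t * m := by
    intro i hi
    have hq1 : m ≤ (n:ℝ) * P i := by
      have := hj0min i hi
      nlinarith
    have hq2 : (n:ℝ) * P i ≤ ρ * m := by
      have := hPρ i hi j0 hj0
      nlinarith
    set q := (n:ℝ) * P i with hq
    set a := (ρ * m - q) / ((ρ - 1) * m) with hadef
    set b := (q - m) / ((ρ - 1) * m) with hbdef
    have hab : a + b = 1 := by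
      rw [hadef, hbdef]
      field_simp
      ring
    have ha : 0 ≤ a := by
      rw [hadef]; apply div_nonneg; linarith; positivity
    have hb0 : 0 ≤ b := by
      rw [hbdef]; apply div_nonneg; linarith; positivity
    have hcomb : a * m + b * (ρ * m) = q := by
      rw [hadef, hbdef]
      field_simp
      ring
    have hconv := Real.convexOn_mul_log.2 (Set.mem_Ici.2 hmpos.le)
      (Set.mem_Ici.2 (by positivity : (0:ℝ) ≤ ρ * m)) ha hb0 hab
    simp only [smul_eq_mul] at hconv
    rw [hcomb] at hconv
    have hlogρm : Real.log (ρ * m) = Real.log ρ + Real.log m :=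
      Real.log_mul (ne_of_gt hρ0) (ne_of_gt hmpos)
    calc q * Real.log q ≤ a * (m * Real.log m) + b * (ρ * m * Real.log (ρ * m)) := hconv
      _ = (Real.log m + t) * q - t * m := by
          rw [hlogρm, hadef, hbdef, ht]
          field_simp
          ring
  have hcard : (Finset.Icc 1 n).card = n := by simp
  have hsum2 : ∑ i ∈ Finset.Icc 1 n, P i * Real.log ((n:ℝ) * P i)
      ≤ Real.log m + t - t * m := by
    have step1 : ∑ i ∈ Finset.Icc 1 n, P i * Real.log ((n:ℝ) * P i)
        = ∑ i ∈ Finset.Icc 1 n,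
            ((1:ℝ)/n) * (((n:ℝ) * P i) * Real.log ((n:ℝ) * P i)) := by
      apply Finset.sum_congr rfl
      intro i _
      field_simp
    rw [step1]
    calc ∑ i ∈ Finset.Icc 1 n, ((1:ℝ)/n) * (((n:ℝ) * P i) * Real.log ((n:ℝ) * P i))
        ≤ ∑ i ∈ Finset.Icc 1 n,
            ((1:ℝ)/n) * ((Real.log m + t) * ((n:ℝ) * P i) - t * m) := by
          apply Finset.sum_le_sum
          intro i hi
          exact mul_le_mul_of_nonneg_left (key i hi) (by positivity)
      _ = Real.log m + t - t * m := by
          rw [← Finset.mul_sum, Finset.sum_sub_distrib, Finset.sum_const, hcard]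
          have : ∑ i ∈ Finset.Icc 1 n, (Real.log m + t) * ((n:ℝ) * P i)
              = (Real.log m + t) * (n:ℝ) * ∑ i ∈ Finset.Icc 1 n, P i := by
            rw [Finset.mul_sum]
            apply Finset.sum_congr rfl
            intro i _
            ring
          rw [this, hsum]
          field_simp
          ring
  -- split log
  have hsplit : ∑ i ∈ Finset.Icc 1 n, P i * Real.log ((n:ℝ) * P i)
      = Real.log n + ∑ i ∈ Finset.Icc 1 n, P i * Real.log (P i) := by
    have : ∀ i ∈ Finset.Icc 1 n,
        P i * Real.log ((n:ℝ) * P i) = P i * Real.log n + P i * Real.log (P i) := by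
      intro i hi
      rw [Real.log_mul (ne_of_gt hnpos) (ne_of_gt (hpos i hi))]
      ring
    rw [Finset.sum_congr rfl this, Finset.sum_add_distrib, ← Finset.sum_mul, hsum]
    ring
  -- log(mt) ≤ mt − 1
  have hmt : Real.log m + Real.log t ≤ m * t - 1 := by
    have h1 := Real.log_le_sub_one_of_pos (mul_pos hmpos htpos)
    rwa [Real.log_mul (ne_of_gt hmpos) (ne_of_gt htpos)] at h1
  have hE : Real.log (Real.exp 1 * ρ * Real.log ρ / (ρ - 1)) = 1 + Real.log t := by
    have : Real.exp 1 * ρ * Real.log ρ / (ρ - 1) = Real.exp 1 * t := by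
      rw [ht]; ring
    rw [this, Real.log_mul (Real.exp_ne_zero 1) (ne_of_gt htpos), Real.log_exp]
  rw [hE]
  have := hsplit ▸ hsum2
  linarith
end
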